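/- arXiv:0908.1992 — 6 statements merged into one kernel-verified Lean document; each statement's English description precedes it below -/
import Mathlib

section
/- Every countable group can be embedded into a two-generated group. -/
/-!
Higman–Neumann–Neumann: enumerate `G` as `e 0 = 1, e 1, e 2, …` and let `a, b` be free
generators of `F₂`. In `G ∗ F₂` the families `bⁿ a b⁻ⁿ` and `e n · aⁿ b a⁻ⁿ` (`n : ℕ`) both freely
generate free subgroups (the second one because it maps onto `aⁿ b a⁻ⁿ` when `G` is killed), so
the HNN extension with stable letter `t` conjugating the first family to the second contains `G`.
It is generated by `a` and `t`: first `b = t a t⁻¹`, hence all of `F₂`, and then every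
`e n = t (bⁿ a b⁻ⁿ) t⁻¹ (aⁿ b a⁻ⁿ)⁻¹`.
-/

open Function Monoid

theorem exists_surjective_nat_zero_eq {α : Type*} [Countable α] (a : α) :
    ∃ e : ℕ → α, Surjective e ∧ e 0 = a := by
  have : Nonempty α := ⟨a⟩
  obtain ⟨e, he⟩ := exists_surjective_nat α
  refine ⟨fun n => Nat.casesOn n a e, fun x => ?_, rfl⟩
  obtain ⟨n, rfl⟩ := he x
  exact ⟨n + 1, rfl⟩

def FreeGroup.shift : Multiplicative ℤ →* MulAut (FreeGroup ℤ) where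
  toFun k := freeGroupCongr (Equiv.addRight k.toAdd)
  map_one' := by ext x; simp
  map_mul' k l := by ext x; simp [MulAut.mul_apply, FreeGroup.map.comp, add_comm]

section conjPowers

variable {α H K : Type*} [Group H] [Group K]

def conjPowers (x y : H) : FreeGroup ℕ →* H :=
  FreeGroup.lift fun n => x ^ n * y * (x ^ n)⁻¹

@[simp]
theorem conjPowers_of (x y : H) (n : ℕ) :
    conjPowers x y (FreeGroup.of n) = x ^ n * y * (x ^ n)⁻¹ :=
  FreeGroup.lift_apply_of

theorem MonoidHom.comp_conjPowers (f : H →* K) (x y : H) :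
    f.comp (conjPowers x y) = conjPowers (f x) (f y) :=
  FreeGroup.ext_hom _ _ fun n => by simp

theorem FreeGroup.injective_conjPowers {u v : α} (h : u ≠ v) :
    Injective (conjPowers (of u) (of v)) := by
  classical
  -- `θ` sends `u` to the generator `τ` of `ℤ` and `v` to `x₀`; in `F(ℤ) ⋊ ℤ` the conjugate
  -- `τⁿ x₀ τ⁻ⁿ` is the free generator `xₙ`.
  let θ : FreeGroup α →* FreeGroup ℤ ⋊[shift] Multiplicative ℤ :=
    lift fun x => if x = u then SemidirectProduct.inr (.ofAdd 1) else SemidirectProduct.inl (of 0)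
  have hθ : θ.comp (conjPowers (of u) (of v)) =
      SemidirectProduct.inl.comp (map Nat.cast) := by
    have hu : θ (of u) = SemidirectProduct.inr (.ofAdd 1) := by simp [θ]
    have hv : θ (of v) = SemidirectProduct.inl (of 0) := by simp [θ, h.symm]
    rw [MonoidHom.comp_conjPowers, hu, hv]
    refine ext_hom _ _ fun n => ?_
    rw [conjPowers_of, ← _root_.map_pow, ← _root_.map_inv, ← SemidirectProduct.inl_aut,
      MonoidHom.comp_apply, map.of]
    simp [shift]
  refine Injective.of_comp (f := θ) ?_
  rw [← MonoidHom.coe_comp, hθ, MonoidHom.coe_comp]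
  exact SemidirectProduct.inl_injective.comp (map_injective Nat.cast_injective)

end conjPowers

namespace MonoidHom

variable {G F : Type*} [Group G] [Group F] {f g : F →* G}

noncomputable def rangeEquivRange (hf : Injective f) (hg : Injective g) : f.range ≃* g.range :=
  (ofInjective hf).symm.trans (ofInjective hg)

theorem rangeEquivRange_apply (hf : Injective f) (hg : Injective g) (w : F) :
    rangeEquivRange hf hg ⟨f w, w, rfl⟩ = ⟨g w, w, rfl⟩ := by
  have h : (ofInjective hf).symm ⟨f w, w, rfl⟩ = w :=
    (MulEquiv.symm_apply_eq _).2 (Subtype.ext (ofInjective_apply hf).symm)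
  rw [rangeEquivRange, MulEquiv.trans_apply, h]
  exact Subtype.ext (ofInjective_apply hg)

end MonoidHom

namespace HNNExtension

variable {G F : Type*} [Group G] [Group F]

theorem eq_top_of_range_of_le {A B : Subgroup G} {φ : A ≃* B}
    {K : Subgroup (HNNExtension G A B φ)} (hof : of.range ≤ K) (ht : t ∈ K) : K = ⊤ := by
  rw [eq_top_iff]
  rintro x -
  induction x using induction_on with
  | of g => exact hof ⟨g, rfl⟩
  | t => exact ht
  | mul x y hx hy => exact K.mul_mem hx hy
  | inv x hx => exact K.inv_mem hx

theorem of_apply_eq_conj {f g : F →* G} (hf : Injective f) (hg : Injective g) (w : F) :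
    (of (g w) : HNNExtension G f.range g.range (MonoidHom.rangeEquivRange hf hg)) =
      t * of (f w) * t⁻¹ := by
  simpa [MonoidHom.rangeEquivRange_apply] using
    equiv_eq_conj (φ := MonoidHom.rangeEquivRange hf hg) ⟨f w, w, rfl⟩

end HNNExtension

namespace TwoGeneratedEmbedding

open HNNExtension

variable {G : Type*} [Group G]

variable (G) in
def leftFamily : FreeGroup ℕ →* Coprod G (FreeGroup Bool) :=
  (Coprod.inr : FreeGroup Bool →* _).comp (conjPowers (FreeGroup.of false) (FreeGroup.of true))

def rightFamily (e : ℕ → G) : FreeGroup ℕ →* Coprod G (FreeGroup Bool) :=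
  FreeGroup.lift fun n =>
    Coprod.inl (e n) * Coprod.inr (conjPowers (FreeGroup.of true) (FreeGroup.of false) (.of n))

theorem leftFamily_of (n : ℕ) :
    leftFamily G (FreeGroup.of n) =
      Coprod.inr (conjPowers (FreeGroup.of false) (FreeGroup.of true) (FreeGroup.of n)) :=
  rfl

theorem rightFamily_of (e : ℕ → G) (n : ℕ) :
    rightFamily e (FreeGroup.of n) =
      Coprod.inl (e n) * Coprod.inr (conjPowers (FreeGroup.of true) (FreeGroup.of false) (.of n)) :=
  FreeGroup.lift_apply_of

theorem injective_leftFamily : Injective (leftFamily G) :=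
  Coprod.inr_injective.comp (FreeGroup.injective_conjPowers Bool.false_ne_true)

theorem injective_rightFamily (e : ℕ → G) : Injective (rightFamily e) := by
  have h : Coprod.snd.comp (rightFamily e) = conjPowers (FreeGroup.of true) (FreeGroup.of false) :=
    FreeGroup.ext_hom _ _ fun n => by simp [rightFamily_of]
  refine Injective.of_comp (f := Coprod.snd) ?_
  rw [← MonoidHom.coe_comp, h]
  exact FreeGroup.injective_conjPowers Bool.false_ne_true.symm

abbrev Envelope (e : ℕ → G) : Type _ :=
  HNNExtension (Coprod G (FreeGroup Bool)) (leftFamily G).range (rightFamily e).range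
    (MonoidHom.rangeEquivRange injective_leftFamily (injective_rightFamily e))

theorem closure_pair_eq_top {e : ℕ → G} (he : Surjective e) (he0 : e 0 = 1) :
    Subgroup.closure {(of (Coprod.inr (FreeGroup.of true)) : Envelope e), t} = ⊤ := by
  set K := Subgroup.closure {(of (Coprod.inr (FreeGroup.of true)) : Envelope e), t}
  have hx : of (Coprod.inr (FreeGroup.of true)) ∈ K := Subgroup.subset_closure (by simp)
  have ht : t ∈ K := Subgroup.subset_closure (by simp)
  have hconj (w : FreeGroup ℕ) (hw : of (leftFamily G w) ∈ K) :
      (of (rightFamily e w) : Envelope e) ∈ K := by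
    rw [of_apply_eq_conj]
    exact K.mul_mem (K.mul_mem ht hw) (K.inv_mem ht)
  have hF : (of.comp Coprod.inr).range ≤ K := by
    refine (MonoidHom.range_eq_map _).trans_le ?_
    rw [← FreeGroup.closure_range_of, MonoidHom.map_closure, Subgroup.closure_le]
    rintro _ ⟨_, ⟨(_ | _), rfl⟩, rfl⟩
    · have h := hconj (FreeGroup.of 0) (by simpa [leftFamily_of] using hx)
      simpa [rightFamily_of, he0] using h
    · exact hx
  have hG : (of.comp Coprod.inl).range ≤ K := by
    rintro _ ⟨g, rfl⟩
    obtain ⟨n, rfl⟩ := he g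
    have hc := hF ⟨conjPowers (FreeGroup.of true) (FreeGroup.of false) (FreeGroup.of n), rfl⟩
    have h := K.mul_mem (hconj (FreeGroup.of n) (hF ⟨_, rfl⟩)) (K.inv_mem hc)
    rwa [rightFamily_of, map_mul, MonoidHom.comp_apply, mul_inv_cancel_right] at h
  refine eq_top_of_range_of_le ?_ ht
  rw [Coprod.range_eq]
  exact sup_le hG hF

end TwoGeneratedEmbedding

/-- Every countable group can be embedded into a two-generated group. -/
theorem countable_group_embeds_into_two_generated_group
    (G : Type) [Group G] [Countable G] :
    ∃ (H : Type) (_ : Group H) (f : G →* H),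
      Function.Injective f ∧
      ∃ a b : H, Subgroup.closure ({a, b} : Set H) = ⊤ := by
  obtain ⟨e, he, he0⟩ := exists_surjective_nat_zero_eq (1 : G)
  exact ⟨TwoGeneratedEmbedding.Envelope e, inferInstance, HNNExtension.of.comp Coprod.inl,
    (HNNExtension.of_injective _).comp Coprod.inl_injective, _, HNNExtension.t,
    TwoGeneratedEmbedding.closure_pair_eq_top he he0⟩
end

section
/- Every countably generated associative unital algebra over a field k can be embedded into a two-generated associative unital algebra over k. -/
open scoped Matrix
namespace MalcevEmbed
open Finset


/-- carrier class: `q ≡ 2^(2j) (mod 2^(2j+3))`, `j ≥ 1`. -/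
def carP (j : ℕ) (q : ℤ) : Prop := 1 ≤ j ∧ (2:ℤ)^(2*j+3) ∣ (q - 2^(2*j))

/-- selector class: `q ≡ 2^(2j)+1 (mod 2^(2j+3))`, `j ≥ 1`. -/
def selP (j : ℕ) (q : ℤ) : Prop := 1 ≤ j ∧ (2:ℤ)^(2*j+3) ∣ (q - (2^(2*j)+1))

lemma not_dvd_factor {e f : ℕ} {w : ℤ} (hw : Odd w) (hef : e < f) :
    ¬ ((2:ℤ)^f ∣ 2^e * w) := by
  intro hdvd
  have h1 : (2:ℤ)^(e+1) ∣ 2^e * w :=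
    dvd_trans (pow_dvd_pow 2 (by omega)) hdvd
  rw [pow_succ] at h1
  have h2 : (2:ℤ) ∣ w := by
    have := (mul_dvd_mul_iff_left (a := (2:ℤ)^e) (by positivity)).mp h1
    exact this
  exact (Int.not_even_iff_odd.mpr hw) (even_iff_two_dvd.mpr h2)

lemma even_pow_int {n : ℕ} (hn : 1 ≤ n) : Even ((2:ℤ)^n) := by
  obtain ⟨m, rfl⟩ : ∃ m, n = m + 1 := ⟨n - 1, by omega⟩
  rw [pow_succ]
  exact (Even.mul_left (even_two) _)

lemma carP_even {j : ℕ} {q : ℤ} (h : carP j q) : Even q := by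
  obtain ⟨hj, hd⟩ := h
  have h1 : Even (q - 2^(2*j)) := by
    rcases hd with ⟨c, hc⟩
    exact ⟨2^(2*j+2)*c, by rw [hc]; ring⟩
  have h2 : Even ((2:ℤ)^(2*j)) := even_pow_int (by omega)
  have := h1.add h2
  simpa using this

lemma selP_odd {j : ℕ} {q : ℤ} (h : selP j q) : Odd q := by
  obtain ⟨hj, hd⟩ := h
  have h1 : Even (q - (2^(2*j)+1) + 2^(2*j)) := by
    rcases hd with ⟨c, hc⟩
    have h2 : Even ((2:ℤ)^(2*j)) := even_pow_int (by omega)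
    refine Even.add ?_ h2
    exact ⟨2^(2*j+2)*c, by rw [hc]; ring⟩
  have : q = (q - (2^(2*j)+1) + 2^(2*j)) + 1 := by ring
  rw [this]
  exact h1.add_one

lemma carP_unique {j₁ j₂ : ℕ} {q : ℤ} (h₁ : carP j₁ q) (h₂ : carP j₂ q) : j₁ = j₂ := by
  rcases h₁ with ⟨hj₁, hd₁⟩
  rcases h₂ with ⟨hj₂, hd₂⟩
  by_contra hne
  -- wlog j₁ < j₂
  wlog hlt : j₁ < j₂ generalizing j₁ j₂
  · exact this hj₂ hd₂ hj₁ hd₁ (Ne.symm hne) (by omega)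
  have hd₂' : (2:ℤ)^(2*j₁+3) ∣ (q - 2^(2*j₂)) :=
    dvd_trans (pow_dvd_pow 2 (by omega)) hd₂
  have hz : (2:ℤ)^(2*j₁+3) ∣ (2^(2*j₂) - 2^(2*j₁)) := by
    have := dvd_sub hd₁ hd₂'
    simpa using this
  obtain ⟨d, hd⟩ : ∃ d, 2*j₂ = 2*j₁ + (d+1) := ⟨2*j₂ - 2*j₁ - 1, by omega⟩
  have hfact : (2:ℤ)^(2*j₂) - 2^(2*j₁) = 2^(2*j₁) * (2^(d+1) - 1) := by
    rw [hd, pow_add]; ring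
  rw [hfact] at hz
  exact not_dvd_factor ((even_pow_int (by omega)).sub_odd odd_one) (by omega) hz

lemma selP_unique {j₁ j₂ : ℕ} {q : ℤ} (h₁ : selP j₁ q) (h₂ : selP j₂ q) : j₁ = j₂ := by
  rcases h₁ with ⟨hj₁, hd₁⟩
  rcases h₂ with ⟨hj₂, hd₂⟩
  by_contra hne
  wlog hlt : j₁ < j₂ generalizing j₁ j₂
  · exact this hj₂ hd₂ hj₁ hd₁ (Ne.symm hne) (by omega)
  have hd₂' : (2:ℤ)^(2*j₁+3) ∣ (q - (2^(2*j₂)+1)) :=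
    dvd_trans (pow_dvd_pow 2 (by omega)) hd₂
  have hz : (2:ℤ)^(2*j₁+3) ∣ (2^(2*j₂) - 2^(2*j₁)) := by
    have := dvd_sub hd₁ hd₂'
    have h' : q - (2^(2*j₁)+1) - (q - (2^(2*j₂)+1)) = 2^(2*j₂) - 2^(2*j₁) := by ring
    rwa [h'] at this
  obtain ⟨d, hd⟩ : ∃ d, 2*j₂ = 2*j₁ + (d+1) := ⟨2*j₂ - 2*j₁ - 1, by omega⟩
  have hfact : (2:ℤ)^(2*j₂) - 2^(2*j₁) = 2^(2*j₁) * (2^(d+1) - 1) := by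
    rw [hd, pow_add]; ring
  rw [hfact] at hz
  exact not_dvd_factor ((even_pow_int (by omega)).sub_odd odd_one) (by omega) hz

/-- the shift used at level `i` -/
def dle (i : ℕ) : ℤ := 1 + 2^(2*i+3)

/-- carrier positions of level `j ≤ i` map to selector positions under `+ dle i`. -/
lemma carP_to_selP {i j : ℕ} {q : ℤ} (h : carP j q) (hji : j ≤ i) : selP j (q + dle i) := by
  obtain ⟨hj, hd⟩ := h
  refine ⟨hj, ?_⟩
  have h2 : (2:ℤ)^(2*j+3) ∣ 2^(2*i+3) := pow_dvd_pow 2 (by omega)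
  have := dvd_add hd h2
  have heq : q - 2^(2*j) + 2^(2*i+3) = q + dle i - (2^(2*j)+1) := by
    unfold dle; ring
  rwa [heq] at this

/-- main compatibility: carrier at `q`, selector at `q + dle i` forces same level `≤ i`. -/
lemma carP_selP_compat {i j j' : ℕ} {q : ℤ} (h₁ : carP j q) (h₂ : selP j' (q + dle i))
    (hi : 1 ≤ i) : j = j' ∧ j ≤ i := by
  rcases h₁ with ⟨hj, hd₁⟩
  rcases h₂ with ⟨hj', hd₂⟩
  have hd₂' : (2:ℤ)^(2*j'+3) ∣ (q + 2^(2*i+3) - 2^(2*j')) := by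
    have heq : q + dle i - (2^(2*j')+1) = q + 2^(2*i+3) - 2^(2*j') := by unfold dle; ring
    rwa [heq] at hd₂
  -- common modulus exponent
  have hz : (2:ℤ)^(2*(min j j')+3) ∣ (2^(2*i+3) + 2^(2*j) - 2^(2*j')) := by
    have e₁ : (2:ℤ)^(2*(min j j')+3) ∣ (q - 2^(2*j)) :=
      dvd_trans (pow_dvd_pow 2 (by omega)) hd₁
    have e₂ : (2:ℤ)^(2*(min j j')+3) ∣ (q + 2^(2*i+3) - 2^(2*j')) :=
      dvd_trans (pow_dvd_pow 2 (by omega)) hd₂'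
    have := dvd_sub e₂ e₁
    have heq : q + 2^(2*i+3) - 2^(2*j') - (q - 2^(2*j)) = 2^(2*i+3) + 2^(2*j) - 2^(2*j') := by
      ring
    rwa [heq] at this
  rcases lt_trichotomy j j' with hlt | heq | hgt
  · exfalso
    rcases le_or_gt j (i+1) with hji | hji
    · -- z = 2^{2j} (2^{(2i+3)-2j} + 1 - 2^{2j'-2j})
      obtain ⟨d, hdd⟩ : ∃ d, 2*i+3 = 2*j + (d+1) := ⟨2*i+2-2*j, by omega⟩
      obtain ⟨e, hee⟩ : ∃ e, 2*j' = 2*j + (e+1) := ⟨2*j'-2*j-1, by omega⟩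
      have hfact : (2:ℤ)^(2*i+3) + 2^(2*j) - 2^(2*j')
          = 2^(2*j) * (2^(d+1) + 1 - 2^(e+1)) := by
        rw [hdd, hee, pow_add, pow_add]; ring
      rw [hfact] at hz
      refine not_dvd_factor ?_ (by omega) hz
      have h1 : Odd ((1:ℤ) - 2^(e+1)) := (odd_one).sub_even (even_pow_int (by omega))
      have := (even_pow_int (n := d+1) (by omega)).add_odd h1
      have heq2 : (2:ℤ)^(d+1) + (1 - 2^(e+1)) = 2^(d+1) + 1 - 2^(e+1) := by ring
      rwa [heq2] at this
    · -- j ≥ i+2 : z = 2^{2i+3}(1 + 2^{2j-(2i+3)} - 2^{2j'-(2i+3)})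
      obtain ⟨d, hdd⟩ : ∃ d, 2*j = (2*i+3) + (d+1) := ⟨2*j-2*i-4, by omega⟩
      obtain ⟨e, hee⟩ : ∃ e, 2*j' = (2*i+3) + (e+1) := ⟨2*j'-2*i-4, by omega⟩
      have hfact : (2:ℤ)^(2*i+3) + 2^(2*j) - 2^(2*j')
          = 2^(2*i+3) * (1 + 2^(d+1) - 2^(e+1)) := by
        rw [hdd, hee, pow_add, pow_add]; ring
      rw [hfact] at hz
      refine not_dvd_factor ?_ (by omega) hz
      have h1 : Odd ((1:ℤ) + 2^(d+1)) := by
        have := (even_pow_int (n := d+1) (by omega)).add_one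
        rwa [add_comm] at this
      exact h1.sub_even (even_pow_int (n := e+1) (by omega))
  · -- j = j' : need j ≤ i
    subst heq
    constructor
    · rfl
    · by_contra hji
      have hz' : (2:ℤ)^(2*j+3) ∣ (2:ℤ)^(2*i+3) := by
        have heq2 : (2:ℤ)^(2*i+3) + 2^(2*j) - 2^(2*j) = 2^(2*i+3) := by ring
        rw [min_self, heq2] at hz
        exact hz
      have : (2:ℤ)^(2*i+3) = 2^(2*i+3) * 1 := by ring
      rw [this] at hz'
      exact not_dvd_factor odd_one (by omega) hz'
  · exfalso
    rcases le_or_gt j' (i+1) with hji | hji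
    · -- t = j' ≤ i+1 : z = 2^{2j'}(2^{(2i+3)-2j'} + 2^{2j-2j'} - 1)
      obtain ⟨d, hdd⟩ : ∃ d, 2*i+3 = 2*j' + (d+1) := ⟨2*i+2-2*j', by omega⟩
      obtain ⟨e, hee⟩ : ∃ e, 2*j = 2*j' + (e+1) := ⟨2*j-2*j'-1, by omega⟩
      have hfact : (2:ℤ)^(2*i+3) + 2^(2*j) - 2^(2*j')
          = 2^(2*j') * (2^(d+1) + 2^(e+1) - 1) := by
        rw [hdd, hee, pow_add, pow_add]; ring
      rw [hfact] at hz
      refine not_dvd_factor ?_ (by omega) hz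
      have h1 : Even ((2:ℤ)^(d+1) + 2^(e+1)) :=
        (even_pow_int (by omega)).add (even_pow_int (by omega))
      exact h1.sub_odd odd_one
    · obtain ⟨d, hdd⟩ : ∃ d, 2*j = (2*i+3) + (d+1) := ⟨2*j-2*i-4, by omega⟩
      obtain ⟨e, hee⟩ : ∃ e, 2*j' = (2*i+3) + (e+1) := ⟨2*j'-2*i-4, by omega⟩
      have hfact : (2:ℤ)^(2*i+3) + 2^(2*j) - 2^(2*j')
          = 2^(2*i+3) * (1 + 2^(d+1) - 2^(e+1)) := by
        rw [hdd, hee, pow_add, pow_add]; ring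
      rw [hfact] at hz
      refine not_dvd_factor ?_ (by omega) hz
      have h1 : Odd ((1:ℤ) + 2^(d+1)) := by
        have := (even_pow_int (n := d+1) (by omega)).add_one
        rwa [add_comm] at this
      exact h1.sub_even (even_pow_int (n := e+1) (by omega))

/-- selector at `q` and carrier at `q + dle i` never happen together. -/
lemma selP_carP_incompat {i j j' : ℕ} {q : ℤ} (h₁ : selP j q) (h₂ : carP j' (q + dle i))
    (hi : 1 ≤ i) : False := by
  rcases h₁ with ⟨hj, hd₁⟩
  rcases h₂ with ⟨hj', hd₂⟩
  have hz : (2:ℤ)^(2*(min j j')+3) ∣ (2 + 2^(2*i+3) + 2^(2*j) - 2^(2*j')) := by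
    have e₁ : (2:ℤ)^(2*(min j j')+3) ∣ (q - (2^(2*j)+1)) :=
      dvd_trans (pow_dvd_pow 2 (by omega)) hd₁
    have e₂ : (2:ℤ)^(2*(min j j')+3) ∣ (q + dle i - 2^(2*j')) :=
      dvd_trans (pow_dvd_pow 2 (by omega)) hd₂
    have := dvd_sub e₂ e₁
    have heq : q + dle i - 2^(2*j') - (q - (2^(2*j)+1))
        = 2 + 2^(2*i+3) + 2^(2*j) - 2^(2*j') := by unfold dle; ring
    rwa [heq] at this
  obtain ⟨a, ha⟩ : ∃ a, 2*i+3 = 1 + (a+1) := ⟨2*i+1, by omega⟩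
  obtain ⟨b, hb⟩ : ∃ b, 2*j = 1 + (b+1) := ⟨2*j-2, by omega⟩
  obtain ⟨c, hc⟩ : ∃ c, 2*j' = 1 + (c+1) := ⟨2*j'-2, by omega⟩
  have hfact : (2:ℤ) + 2^(2*i+3) + 2^(2*j) - 2^(2*j')
      = 2^1 * (1 + 2^(a+1) + 2^(b+1) - 2^(c+1)) := by
    rw [ha, hb, hc, pow_add, pow_add, pow_add]; ring
  rw [hfact] at hz
  refine not_dvd_factor ?_ (by omega) hz
  have h1 : Odd ((1:ℤ) + 2^(a+1)) := by
    have := (even_pow_int (n := a+1) (by omega)).add_one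
    rwa [add_comm] at this
  have h2 : Odd ((1:ℤ) + 2^(a+1) + 2^(b+1)) := h1.add_even (even_pow_int (by omega))
  have := h2.sub_even (even_pow_int (n := c+1) (by omega))
  exact this


open Finset

/-- generic counting: multiples-class count in a full period range. -/
lemma card_filter_dvd_range (M N : ℕ) (hM : 0 < M) (r : ℤ) :
    ((Finset.range (M*N)).filter (fun σ : ℕ => (M:ℤ) ∣ (r - σ))).card = N := by
  classical
  have hmap : ((Finset.range (M*N)).filter (fun σ : ℕ => (M:ℤ) ∣ (r - σ))).map
      ⟨(Nat.cast : ℕ → ℤ), Nat.cast_injective⟩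
      = (Finset.Ico (0:ℤ) ((M:ℤ)*(N:ℤ))).filter (fun x => x ≡ r [ZMOD (M:ℤ)]) := by
    ext y
    simp only [Finset.mem_map, Finset.mem_filter, Finset.mem_range, Finset.mem_Ico,
      Function.Embedding.coeFn_mk]
    constructor
    · rintro ⟨σ, ⟨hσ, hdvd⟩, rfl⟩
      refine ⟨⟨by positivity, ?_⟩, Int.modEq_iff_dvd.mpr hdvd⟩
      push_cast
      exact_mod_cast hσ
    · rintro ⟨⟨h0, hlt⟩, hmod⟩
      lift y to ℕ using h0
      refine ⟨y, ⟨?_, Int.modEq_iff_dvd.mp hmod⟩, rfl⟩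
      exact_mod_cast hlt
  have hcard := congrArg Finset.card hmap
  rw [Finset.card_map] at hcard
  have hM' : (0:ℤ) < (M:ℤ) := by exact_mod_cast hM
  have hEq := Int.Ico_filter_modEq_card (0:ℤ) ((M:ℤ)*(N:ℤ)) hM' r
  push_cast at hEq
  have hM0 : ((M:ℚ)) ≠ 0 := by positivity
  rw [show ((M:ℚ) * (N:ℚ) - (r:ℚ)) / (M:ℚ) = (-(r:ℚ))/(M:ℚ) + (N:ℚ) by field_simp; ring,
    show ((0:ℚ) - (r:ℚ)) / (M:ℚ) = (-(r:ℚ))/(M:ℚ) by ring] at hEq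
  have h3 : ⌈(-(r:ℚ))/(M:ℚ) + (N:ℚ)⌉ = ⌈(-(r:ℚ))/(M:ℚ)⌉ + (N:ℤ) := by
    have := Int.ceil_add_intCast ((-(r:ℚ))/(M:ℚ)) (N:ℤ)
    rw [← this]
    norm_num
  rw [h3] at hEq
  simp only [add_sub_cancel_left] at hEq
  have : ((((Finset.Ico (0:ℤ) ((M:ℤ)*(N:ℤ))).filter (fun x => x ≡ r [ZMOD (M:ℤ)])).card : ℤ))
      = (N:ℤ) := by
    rw [hEq]; simp
  rw [hcard]
  exact_mod_cast this


open Finset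

lemma even_pow_int' {n : ℕ} (hn : 1 ≤ n) : Even ((2:ℤ)^n) := by
  obtain ⟨m, rfl⟩ : ∃ m, n = m + 1 := ⟨n - 1, by omega⟩
  rw [pow_succ]
  exact (Even.mul_left (even_two) _)

lemma dle_odd (i : ℕ) : Odd (dle i) := by
  unfold dle
  rw [add_comm]
  exact (even_pow_int' (by omega)).add_one

lemma carP_selP_disj {j j' : ℕ} {q : ℤ} (h₁ : carP j q) (h₂ : selP j' q) : False :=
  (Int.not_odd_iff_even.mpr (carP_even h₁)) (selP_odd h₂)

variable {A : Type} [Ring A]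

open Classical in
noncomputable def hm (x : ℕ → A) (q : ℤ) : Matrix (Fin 2) (Fin 2) A :=
  if hc : ∃ j, carP j q then !![1, x hc.choose; 0, 1]
  else if ∃ j, selP j q then !![1, 0; 1, 1]
  else 1

open Classical in
noncomputable def hn (x : ℕ → A) (q : ℤ) : Matrix (Fin 2) (Fin 2) A :=
  if hc : ∃ j, carP j q then !![1, -(x hc.choose); 0, 1]
  else if ∃ j, selP j q then !![1, 0; -1, 1]
  else 1

variable (x : ℕ → A)

lemma hm_car {j : ℕ} {q : ℤ} (h : carP j q) : hm x q = !![1, x j; 0, 1] := by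
  have hex : ∃ j', carP j' q := ⟨j, h⟩
  rw [hm, dif_pos hex, carP_unique hex.choose_spec h]

lemma hn_car {j : ℕ} {q : ℤ} (h : carP j q) : hn x q = !![1, -(x j); 0, 1] := by
  have hex : ∃ j', carP j' q := ⟨j, h⟩
  rw [hn, dif_pos hex, carP_unique hex.choose_spec h]

lemma hm_sel {j : ℕ} {q : ℤ} (h : selP j q) : hm x q = !![1, 0; 1, 1] := by
  have hnc : ¬ ∃ j', carP j' q := fun ⟨_, hc⟩ => carP_selP_disj hc h
  rw [hm, dif_neg hnc, if_pos ⟨j, h⟩]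

lemma hn_sel {j : ℕ} {q : ℤ} (h : selP j q) : hn x q = !![1, 0; -1, 1] := by
  have hnc : ¬ ∃ j', carP j' q := fun ⟨_, hc⟩ => carP_selP_disj hc h
  rw [hn, dif_neg hnc, if_pos ⟨j, h⟩]

lemma hm_one {q : ℤ} (h1 : ¬ ∃ j, carP j q) (h2 : ¬ ∃ j, selP j q) : hm x q = 1 := by
  rw [hm, dif_neg h1, if_neg h2]

lemma hn_one {q : ℤ} (h1 : ¬ ∃ j, carP j q) (h2 : ¬ ∃ j, selP j q) : hn x q = 1 := by
  rw [hn, dif_neg h1, if_neg h2]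

lemma hm_hn (q : ℤ) : hm x q * hn x q = 1 := by
  by_cases hc : ∃ j, carP j q
  · obtain ⟨j, hj⟩ := hc
    rw [hm_car x hj, hn_car x hj]
    ext a b
    fin_cases a <;> fin_cases b <;>
      simp [Matrix.mul_apply, Fin.sum_univ_two, Matrix.one_apply]
  · by_cases hs : ∃ j, selP j q
    · obtain ⟨j, hj⟩ := hs
      rw [hm_sel x hj, hn_sel x hj]
      ext a b
      fin_cases a <;> fin_cases b <;>
        simp [Matrix.mul_apply, Fin.sum_univ_two, Matrix.one_apply]
    · rw [hm_one x hc hs, hn_one x hc hs, one_mul]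

lemma hn_hm (q : ℤ) : hn x q * hm x q = 1 := by
  by_cases hc : ∃ j, carP j q
  · obtain ⟨j, hj⟩ := hc
    rw [hm_car x hj, hn_car x hj]
    ext a b
    fin_cases a <;> fin_cases b <;>
      simp [Matrix.mul_apply, Fin.sum_univ_two, Matrix.one_apply]
  · by_cases hs : ∃ j, selP j q
    · obtain ⟨j, hj⟩ := hs
      rw [hm_sel x hj, hn_sel x hj]
      ext a b
      fin_cases a <;> fin_cases b <;>
        simp [Matrix.mul_apply, Fin.sum_univ_two, Matrix.one_apply]
    · rw [hm_one x hc hs, hn_one x hc hs, one_mul]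

open Classical in
lemma term1 {i : ℕ} (hi : 1 ≤ i) (q : ℤ) :
    (hn x q - 1) * (hm x (q + dle i) - 1)
      = ∑ j ∈ Finset.Icc 1 i, if carP j q then !![-(x j), 0; 0, 0] else 0 := by
  by_cases hc : ∃ j, carP j q
  · obtain ⟨j₀, hj₀⟩ := hc
    by_cases hji : j₀ ≤ i
    · rw [hn_car x hj₀, hm_sel x (carP_to_selP hj₀ hji)]
      rw [Finset.sum_eq_single_of_mem j₀ (Finset.mem_Icc.mpr ⟨hj₀.1, hji⟩)
        (fun j _ hne => if_neg (fun hcj => hne (carP_unique hcj hj₀)))]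
      rw [if_pos hj₀]
      ext a b
      fin_cases a <;> fin_cases b <;>
        simp [Matrix.mul_apply, Fin.sum_univ_two, Matrix.one_apply]
    · have hm1 : hm x (q + dle i) = 1 := by
        refine hm_one x ?_ ?_
        · rintro ⟨j', hj'⟩
          have : Odd (q + dle i) := (carP_even hj₀).add_odd (dle_odd i)
          exact (Int.not_odd_iff_even.mpr (carP_even hj')) this
        · rintro ⟨j', hj'⟩
          exact hji ((carP_selP_compat hj₀ hj' hi).2)
      rw [hm1, sub_self, mul_zero]
      symm
      refine Finset.sum_eq_zero (fun j hj => if_neg (fun hcj => ?_))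
      rw [carP_unique hcj hj₀] at hj
      exact hji (Finset.mem_Icc.mp hj).2
  · have h0 : ∀ j ∈ Finset.Icc 1 i, (if carP j q then !![-(x j), 0; 0, 0] else (0 : Matrix (Fin 2) (Fin 2) A)) = 0 :=
      fun j _ => if_neg (fun hcj => hc ⟨j, hcj⟩)
    rw [Finset.sum_congr rfl h0, Finset.sum_const, smul_zero]
    by_cases hs : ∃ j, selP j q
    · obtain ⟨j₀, hj₀⟩ := hs
      have hm1 : hm x (q + dle i) = 1 := by
        refine hm_one x ?_ ?_
        · rintro ⟨j', hj'⟩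
          exact selP_carP_incompat hj₀ hj' hi
        · rintro ⟨j', hj'⟩
          have : Even (q + dle i) := (selP_odd hj₀).add_odd (dle_odd i)
          exact (Int.not_odd_iff_even.mpr this) (selP_odd hj')
      rw [hm1, sub_self, mul_zero]
    · rw [hn_one x hc hs, sub_self, zero_mul]

open Classical in
lemma term2 {i : ℕ} (hi : 1 ≤ i) (q : ℤ) :
    (hm x (q + dle i) - 1) * (hn x q - 1)
      = ∑ j ∈ Finset.Icc 1 i, if carP j q then !![0, 0; 0, -(x j)] else 0 := by
  by_cases hc : ∃ j, carP j q
  · obtain ⟨j₀, hj₀⟩ := hc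
    by_cases hji : j₀ ≤ i
    · rw [hn_car x hj₀, hm_sel x (carP_to_selP hj₀ hji)]
      rw [Finset.sum_eq_single_of_mem j₀ (Finset.mem_Icc.mpr ⟨hj₀.1, hji⟩)
        (fun j _ hne => if_neg (fun hcj => hne (carP_unique hcj hj₀)))]
      rw [if_pos hj₀]
      ext a b
      fin_cases a <;> fin_cases b <;>
        simp [Matrix.mul_apply, Fin.sum_univ_two, Matrix.one_apply]
    · have hm1 : hm x (q + dle i) = 1 := by
        refine hm_one x ?_ ?_
        · rintro ⟨j', hj'⟩
          have : Odd (q + dle i) := (carP_even hj₀).add_odd (dle_odd i)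
          exact (Int.not_odd_iff_even.mpr (carP_even hj')) this
        · rintro ⟨j', hj'⟩
          exact hji ((carP_selP_compat hj₀ hj' hi).2)
      rw [hm1, sub_self, zero_mul]
      symm
      refine Finset.sum_eq_zero (fun j hj => if_neg (fun hcj => ?_))
      rw [carP_unique hcj hj₀] at hj
      exact hji (Finset.mem_Icc.mp hj).2
  · have h0 : ∀ j ∈ Finset.Icc 1 i, (if carP j q then !![0, 0; 0, -(x j)] else (0 : Matrix (Fin 2) (Fin 2) A)) = 0 :=
      fun j _ => if_neg (fun hcj => hc ⟨j, hcj⟩)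
    rw [Finset.sum_congr rfl h0, Finset.sum_const, smul_zero]
    by_cases hs : ∃ j, selP j q
    · obtain ⟨j₀, hj₀⟩ := hs
      have hm1 : hm x (q + dle i) = 1 := by
        refine hm_one x ?_ ?_
        · rintro ⟨j', hj'⟩
          exact selP_carP_incompat hj₀ hj' hi
        · rintro ⟨j', hj'⟩
          have : Even (q + dle i) := (selP_odd hj₀).add_odd (dle_odd i)
          exact (Int.not_odd_iff_even.mpr this) (selP_odd hj')
      rw [hm1, sub_self, zero_mul]
    · rw [hn_one x hc hs, sub_self, mul_zero]

lemma term0a (q : ℤ) : (hn x q - 1) * (hm x (q+2) - 1) = 0 := by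
  by_cases hc : ∃ j, carP j q
  · obtain ⟨j₀, hj₀⟩ := hc
    have hev : Even (q + 2) := (carP_even hj₀).add even_two
    have hnsel : ¬ ∃ j, selP j (q+2) := fun ⟨j, hj⟩ =>
      (Int.not_odd_iff_even.mpr hev) (selP_odd hj)
    rw [hn_car x hj₀]
    by_cases hc2 : ∃ j, carP j (q+2)
    · obtain ⟨j₁, hj₁⟩ := hc2
      rw [hm_car x hj₁]
      ext a b
      fin_cases a <;> fin_cases b <;>
        simp [Matrix.mul_apply, Fin.sum_univ_two, Matrix.one_apply]
    · rw [hm_one x hc2 hnsel, sub_self, mul_zero]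
  · by_cases hs : ∃ j, selP j q
    · obtain ⟨j₀, hj₀⟩ := hs
      have hod : Odd (q + 2) := (selP_odd hj₀).add_even even_two
      have hncar : ¬ ∃ j, carP j (q+2) := fun ⟨j, hj⟩ =>
        (Int.not_odd_iff_even.mpr (carP_even hj)) hod
      rw [hn_sel x hj₀]
      by_cases hs2 : ∃ j, selP j (q+2)
      · obtain ⟨j₁, hj₁⟩ := hs2
        rw [hm_sel x hj₁]
        ext a b
        fin_cases a <;> fin_cases b <;>
          simp [Matrix.mul_apply, Fin.sum_univ_two, Matrix.one_apply]
      · rw [hm_one x hncar hs2, sub_self, mul_zero]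
    · rw [hn_one x hc hs, sub_self, zero_mul]

lemma term0b (q : ℤ) : (hm x (q+2) - 1) * (hn x q - 1) = 0 := by
  by_cases hc : ∃ j, carP j q
  · obtain ⟨j₀, hj₀⟩ := hc
    have hev : Even (q + 2) := (carP_even hj₀).add even_two
    have hnsel : ¬ ∃ j, selP j (q+2) := fun ⟨j, hj⟩ =>
      (Int.not_odd_iff_even.mpr hev) (selP_odd hj)
    rw [hn_car x hj₀]
    by_cases hc2 : ∃ j, carP j (q+2)
    · obtain ⟨j₁, hj₁⟩ := hc2
      rw [hm_car x hj₁]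
      ext a b
      fin_cases a <;> fin_cases b <;>
        simp [Matrix.mul_apply, Fin.sum_univ_two, Matrix.one_apply]
    · rw [hm_one x hc2 hnsel, sub_self, zero_mul]
  · by_cases hs : ∃ j, selP j q
    · obtain ⟨j₀, hj₀⟩ := hs
      have hod : Odd (q + 2) := (selP_odd hj₀).add_even even_two
      have hncar : ¬ ∃ j, carP j (q+2) := fun ⟨j, hj⟩ =>
        (Int.not_odd_iff_even.mpr (carP_even hj)) hod
      rw [hn_sel x hj₀]
      by_cases hs2 : ∃ j, selP j (q+2)
      · obtain ⟨j₁, hj₁⟩ := hs2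
        rw [hm_sel x hj₁]
        ext a b
        fin_cases a <;> fin_cases b <;>
          simp [Matrix.mul_apply, Fin.sum_univ_two, Matrix.one_apply]
      · rw [hm_one x hncar hs2, sub_self, zero_mul]
    · rw [hn_one x hc hs, sub_self, mul_zero]


open Finset

variable {A : Type} [Ring A]
variable (x : ℕ → A)

noncomputable def gel (x : ℕ → A) (i : ℕ) : A := ∑ j ∈ Finset.Icc 1 i, (4^(i-j) : ℕ) • x j

lemma pow_eq_MN {i j : ℕ} (hji : j ≤ i) : 2^(2*j+3) * 4^(i-j) = 2^(2*i+3) := by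
  rw [show (4:ℕ) = 2^2 from rfl, ← pow_mul, ← pow_add]
  congr 1
  omega

open Classical in
lemma col_sum {i j : ℕ} (L : ℤ) (hj1 : 1 ≤ j) (hji : j ≤ i)
    (v : Matrix (Fin 2) (Fin 2) A) :
    (∑ σ ∈ Finset.range (2^(2*i+3)),
        if carP j (L - σ) then v else (0:Matrix (Fin 2) (Fin 2) A))
      = (4^(i-j):ℕ) • v := by
  have hcond : ∀ σ : ℕ, carP j (L - σ) ↔ ((2^(2*j+3):ℕ) : ℤ) ∣ ((L - 2^(2*j)) - σ) := by
    intro σ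
    unfold carP
    constructor
    · rintro ⟨-, hd⟩
      push_cast
      have heq : (L:ℤ) - 2^(2*j) - σ = (L - σ) - 2^(2*j) := by ring
      rw [heq]
      exact hd
    · intro hd
      refine ⟨hj1, ?_⟩
      push_cast at hd
      have heq : (L:ℤ) - 2^(2*j) - σ = (L - σ) - 2^(2*j) := by ring
      rwa [heq] at hd
  rw [Finset.sum_congr rfl (fun σ _ => if_congr (hcond σ) rfl rfl), ← Finset.sum_filter,
    Finset.sum_const]
  congr 1
  rw [show (2:ℕ)^(2*i+3) = 2^(2*j+3) * 4^(i-j) from (pow_eq_MN hji).symm]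
  exact card_filter_dvd_range _ _ (by positivity) _

open Classical in
lemma sumID1 {i : ℕ} (hi : 1 ≤ i) (L : ℤ) :
    ∑ σ ∈ Finset.range (2^(2*i+3)), (hn x (L - σ) - 1) * (hm x (L - σ + dle i) - 1)
      = !![-(gel x i), 0; 0, 0] := by
  have h1 : (∑ σ ∈ Finset.range (2^(2*i+3)), (hn x (L - σ) - 1) * (hm x (L - σ + dle i) - 1))
      = ∑ σ ∈ Finset.range (2^(2*i+3)), ∑ j ∈ Finset.Icc 1 i,
          if carP j (L - σ) then !![-(x j), 0; 0, 0] else 0 :=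
    Finset.sum_congr rfl (fun σ _ => term1 x hi (L - σ))
  rw [h1, Finset.sum_comm]
  have h2 : (∑ j ∈ Finset.Icc 1 i, ∑ σ ∈ Finset.range (2^(2*i+3)),
        if carP j (L - σ) then !![-(x j), 0; 0, 0] else (0 : Matrix (Fin 2) (Fin 2) A))
      = ∑ j ∈ Finset.Icc 1 i, (4^(i-j):ℕ) • !![-(x j), 0; 0, 0] :=
    Finset.sum_congr rfl (fun j hj => col_sum L (Finset.mem_Icc.mp hj).1
      (Finset.mem_Icc.mp hj).2 _)
  rw [h2]
  ext a b
  fin_cases a <;> fin_cases b <;>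
    simp [gel, Matrix.sum_apply, Finset.sum_neg_distrib, smul_neg]

open Classical in
lemma sumID2 {i : ℕ} (hi : 1 ≤ i) (L : ℤ) :
    ∑ σ ∈ Finset.range (2^(2*i+3)), (hm x (L - σ + dle i) - 1) * (hn x (L - σ) - 1)
      = !![0, 0; 0, -(gel x i)] := by
  have h1 : (∑ σ ∈ Finset.range (2^(2*i+3)), (hm x (L - σ + dle i) - 1) * (hn x (L - σ) - 1))
      = ∑ σ ∈ Finset.range (2^(2*i+3)), ∑ j ∈ Finset.Icc 1 i,
          if carP j (L - σ) then !![0, 0; 0, -(x j)] else 0 :=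
    Finset.sum_congr rfl (fun σ _ => term2 x hi (L - σ))
  rw [h1, Finset.sum_comm]
  have h2 : (∑ j ∈ Finset.Icc 1 i, ∑ σ ∈ Finset.range (2^(2*i+3)),
        if carP j (L - σ) then !![0, 0; 0, -(x j)] else (0 : Matrix (Fin 2) (Fin 2) A))
      = ∑ j ∈ Finset.Icc 1 i, (4^(i-j):ℕ) • !![0, 0; 0, -(x j)] :=
    Finset.sum_congr rfl (fun j hj => col_sum L (Finset.mem_Icc.mp hj).1
      (Finset.mem_Icc.mp hj).2 _)
  rw [h2]
  ext a b
  fin_cases a <;> fin_cases b <;>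
    simp [gel, Matrix.sum_apply, Finset.sum_neg_distrib, smul_neg]


open Finset

variable {A : Type} [Ring A]
variable (k : Type) [Field k] [Algebra k A]

abbrev MM (A : Type) [Ring A] := ℤ → Matrix (Fin 2) (Fin 2) A

noncomputable def vseq (x : ℕ → A) (p : ℤ) : Matrix (Fin 2) (Fin 2) A :=
  if Even p then hm x (p/2) else hn x ((p-1)/2)

lemma vseq_even (x : ℕ → A) (l : ℤ) : vseq x (2*l) = hm x l := by
  rw [vseq, if_pos ⟨l, two_mul l⟩, Int.mul_ediv_cancel_left _ two_ne_zero]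

lemma vseq_odd (x : ℕ → A) (l : ℤ) : vseq x (2*l+1) = hn x l := by
  have hodd : ¬ Even (2*l+1) := by
    rw [Int.even_iff]
    omega
  have h2 : (2*l+1-1 : ℤ) = 2*l := by ring
  rw [vseq, if_neg hodd, h2, Int.mul_ediv_cancel_left _ two_ne_zero]

def αop : MM A →ₗ[k] MM A where
  toFun f := fun m => f (m-1)
  map_add' f g := rfl
  map_smul' c f := rfl

noncomputable def βop (x : ℕ → A) : MM A →ₗ[k] MM A where
  toFun f := fun m => vseq x (m+1) * f (m+1)
  map_add' f g := by
    funext m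
    simp [mul_add]
  map_smul' c f := by
    funext m
    simp [Matrix.mul_smul]

noncomputable def Vlen (x : ℕ → A) : ℤ → ℕ → Matrix (Fin 2) (Fin 2) A
  | _, 0 => 1
  | p, (n+1) => vseq x p * Vlen x (p+1) n

lemma Vlen_zero (x : ℕ → A) (p : ℤ) : Vlen x p 0 = 1 := rfl
lemma Vlen_succ (x : ℕ → A) (p : ℤ) (n : ℕ) :
    Vlen x p (n+1) = vseq x p * Vlen x (p+1) n := rfl

lemma Vlen_snoc (x : ℕ → A) (n : ℕ) : ∀ p : ℤ,
    Vlen x p (n+1) = Vlen x p n * vseq x (p+n) := by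
  induction n with
  | zero => intro p; simp [Vlen_succ, Vlen_zero]
  | succ n ih =>
    intro p
    rw [Vlen_succ, ih (p+1), Vlen_succ, mul_assoc]
    congr 2
    push_cast
    ring_nf

lemma αop_pow (a : ℕ) (f : MM A) (m : ℤ) : ((αop k)^a) f m = f (m - a) := by
  induction a generalizing f m with
  | zero => simp
  | succ a ih =>
    rw [pow_succ, Module.End.mul_apply, ih]
    show f (m - a - 1) = f (m - (a+1 : ℕ))
    congr 1
    push_cast
    ring

lemma βop_pow (x : ℕ → A) (n : ℕ) (f : MM A) (m : ℤ) :
    ((βop k x)^n) f m = Vlen x (m+1) n * f (m + n) := by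
  induction n generalizing f m with
  | zero => simp [Vlen_zero]
  | succ n ih =>
    rw [pow_succ, Module.End.mul_apply, ih]
    show Vlen x (m+1) n * (vseq x (m + n + 1) * f (m + n + 1)) = _
    have harg : vseq x (m + (n:ℤ) + 1) = vseq x ((m+1) + (n:ℤ)) := by ring_nf
    rw [harg, ← mul_assoc, ← Vlen_snoc]
    congr 1
    push_cast
    ring

/-- diagonal-operator calculus -/
def IsDiagOp (T : MM A →ₗ[k] MM A) (P : ℤ → Matrix (Fin 2) (Fin 2) A) : Prop :=
  ∀ f m, T f m = P m * f m

namespace IsDiagOp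

variable {k}

lemma one : IsDiagOp k (1 : MM A →ₗ[k] MM A) (fun _ => 1) := by
  intro f m; simp

lemma mul {T T' : MM A →ₗ[k] MM A} {P P'} (h : IsDiagOp k T P) (h' : IsDiagOp k T' P') :
    IsDiagOp k (T * T') (fun m => P m * P' m) := by
  intro f m
  have : (T * T') f m = T (T' f) m := rfl
  rw [this, h, h', mul_assoc]

lemma sub {T T' : MM A →ₗ[k] MM A} {P P'} (h : IsDiagOp k T P) (h' : IsDiagOp k T' P') :
    IsDiagOp k (T - T') (fun m => P m - P' m) := by
  intro f m
  have : (T - T') f m = T f m - T' f m := rfl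
  rw [this, h, h', sub_mul]

lemma nsmul {T : MM A →ₗ[k] MM A} {P} (h : IsDiagOp k T P) (n : ℕ) :
    IsDiagOp k (n • T) (fun m => n • P m) := by
  intro f m
  have : (n • T) f m = n • (T f m) := rfl
  rw [this, h, smul_mul_assoc]

lemma fsum {ι : Type*} (s : Finset ι) (T : ι → MM A →ₗ[k] MM A)
    (P : ι → ℤ → Matrix (Fin 2) (Fin 2) A) (h : ∀ a ∈ s, IsDiagOp k (T a) (P a)) :
    IsDiagOp k (∑ a ∈ s, T a) (fun m => ∑ a ∈ s, P a m) := by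
  intro f m
  have h1 : (∑ a ∈ s, T a) f m = ∑ a ∈ s, T a f m := by
    rw [LinearMap.sum_apply]
    exact Finset.sum_apply m s fun c => (T c) f
  rw [h1, Finset.sum_congr rfl (fun a ha => h a ha f m), Finset.sum_mul]

lemma ext {T T' : MM A →ₗ[k] MM A} {P P'} (h : IsDiagOp k T P) (h' : IsDiagOp k T' P')
    (hPP : ∀ m, P m = P' m) : T = T' := by
  ext f m
  rw [h f m, h' f m, hPP]

end IsDiagOp


open Finset

variable {A : Type} [Ring A]
variable (k : Type) [Field k] [Algebra k A]
variable (x : ℕ → A)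

lemma Vlen_ee (s : ℕ) : ∀ l : ℤ, Vlen x (2*l) (2*s+1) = hm x (l+s) := by
  induction s with
  | zero =>
    intro l
    rw [show 2*0+1 = 0+1 from rfl, Vlen_succ, Vlen_zero, mul_one, vseq_even]
    norm_num
  | succ s ih =>
    intro l
    rw [show 2*(s+1)+1 = (2*s+1)+1+1 by ring]
    rw [Vlen_succ, Vlen_succ, vseq_even]
    have h1 : (2*l+1+1 : ℤ) = 2*(l+1) := by ring
    have h0 : vseq x (2*l+1) = hn x l := vseq_odd x l
    rw [h0, h1, ih (l+1)]
    rw [← mul_assoc, hm_hn, one_mul]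
    congr 1
    push_cast
    ring

lemma Vlen_oo (s : ℕ) : ∀ l : ℤ, Vlen x (2*l+1) (2*s+1) = hn x l := by
  induction s with
  | zero =>
    intro l
    rw [show 2*0+1 = 0+1 from rfl, Vlen_succ, Vlen_zero, mul_one, vseq_odd]
  | succ s ih =>
    intro l
    rw [show 2*(s+1)+1 = (2*s+1)+1+1 by ring]
    rw [Vlen_succ, Vlen_succ, vseq_odd]
    have h1 : (2*l+1+1 : ℤ) = 2*(l+1) := by ring
    rw [h1, vseq_even, ih (l+1), hm_hn, mul_one]

/-- the four sampling words -/
noncomputable def aW (τ : ℕ) : MM A →ₗ[k] MM A := αop k * (βop k x)^(2*τ+1) * (αop k)^(2*τ)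
noncomputable def bW (σ : ℕ) : MM A →ₗ[k] MM A := (αop k)^(2*σ) * (βop k x)^(2*σ+1) * αop k
noncomputable def cW (τ : ℕ) : MM A →ₗ[k] MM A :=
  (αop k)^2 * (βop k x)^(2*τ+3) * (αop k)^(2*τ+1)
noncomputable def dW (σ : ℕ) : MM A →ₗ[k] MM A := (αop k)^(2*σ+1) * (βop k x)^(2*σ+1)

lemma aW_diag (τ : ℕ) : IsDiagOp k (aW k x τ) (fun m => Vlen x m (2*τ+1)) := by
  intro f m
  have h1 : (aW k x τ) f m = ((βop k x)^(2*τ+1)) (((αop k)^(2*τ)) f) (m - 1) := rfl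
  rw [h1, βop_pow, αop_pow]
  have e1 : (m - 1 + 1 : ℤ) = m := by ring
  have e2 : (m - 1 + ((2*τ+1 : ℕ) : ℤ) - ((2*τ : ℕ) : ℤ)) = m := by push_cast; ring
  rw [e1, e2]

lemma bW_diag (σ : ℕ) : IsDiagOp k (bW k x σ) (fun m => Vlen x (m - 2*σ + 1) (2*σ+1)) := by
  intro f m
  have h1 : (bW k x σ) f m = ((βop k x)^(2*σ+1)) ((αop k) f) (m - (2*σ : ℕ)) := by
    show ((αop k)^(2*σ)) _ m = _
    rw [αop_pow]
  rw [h1, βop_pow]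
  have h2 : ((αop k) f) (m - ((2*σ:ℕ):ℤ) + ((2*σ+1 : ℕ):ℤ)) = f m := by
    show f _ = f m
    congr 1
    push_cast
    ring
  have e : (m - ((2*σ:ℕ):ℤ) + 1) = m - 2*(σ:ℤ) + 1 := by push_cast; ring
  rw [h2, e]

lemma cW_diag (τ : ℕ) : IsDiagOp k (cW k x τ) (fun m => Vlen x (m - 1) (2*τ+3)) := by
  intro f m
  have h1 : (cW k x τ) f m = ((βop k x)^(2*τ+3)) (((αop k)^(2*τ+1)) f) (m - (2:ℕ)) := by
    show ((αop k)^2) _ m = _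
    rw [αop_pow]
  rw [h1, βop_pow, αop_pow]
  have e1 : (m - ((2:ℕ):ℤ) + 1 : ℤ) = m - 1 := by push_cast; ring
  have e2 : (m - ((2:ℕ):ℤ) + ((2*τ+3 : ℕ) : ℤ) - ((2*τ+1 : ℕ) : ℤ)) = m := by push_cast; ring
  rw [e1, e2]

lemma dW_diag (σ : ℕ) : IsDiagOp k (dW k x σ) (fun m => Vlen x (m - 2*σ) (2*σ+1)) := by
  intro f m
  have h1 : (dW k x σ) f m = ((βop k x)^(2*σ+1)) f (m - (2*σ+1 : ℕ)) := by
    show ((αop k)^(2*σ+1)) _ m = _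
    rw [αop_pow]
  rw [h1, βop_pow]
  have e1 : (m - ((2*σ+1 : ℕ):ℤ) + 1 : ℤ) = m - 2*σ := by push_cast; ring
  have e2 : (m - ((2*σ+1:ℕ):ℤ) + ((2*σ+1 : ℕ) : ℤ)) = m := by push_cast; ring
  rw [e1, e2]

section Stage7
variable {A : Type} [Ring A]
variable {k : Type} [Field k] [Algebra k A]
variable (x : ℕ → A)

/-- scalar 2×2 matrix -/
def scM (a : A) : Matrix (Fin 2) (Fin 2) A := !![a, 0; 0, a]

lemma scM_mul (a : A) (X : Matrix (Fin 2) (Fin 2) A) : scM a * X = a • X := by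
  ext i j
  fin_cases i <;> fin_cases j <;>
    simp [scM, Matrix.mul_apply, Fin.sum_univ_two]

lemma scM_mul_scM (a b : A) : scM a * scM b = scM (a*b) := by
  ext i j
  fin_cases i <;> fin_cases j <;>
    simp [scM, Matrix.mul_apply, Fin.sum_univ_two]

lemma scM_one : scM (1 : A) = 1 := by
  ext i j
  fin_cases i <;> fin_cases j <;> simp [scM, Matrix.one_apply]

/-- the diagonal unital embedding `A → End_k(MM A)` -/
noncomputable def Femb : A →ₐ[k] (MM A →ₗ[k] MM A) where
  toFun a :=
    { toFun := fun f => fun m => scM a * f m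
      map_add' := by intro f g; funext m; simp [mul_add]
      map_smul' := by intro c f; funext m; simp [Matrix.mul_smul] }
  map_one' := by
    apply LinearMap.ext; intro f; funext m
    simp [scM_one]
  map_mul' a b := by
    apply LinearMap.ext; intro f; funext m
    show scM (a*b) * f m = scM a * (scM b * f m)
    rw [← scM_mul_scM, mul_assoc]
  map_zero' := by
    apply LinearMap.ext; intro f; funext m
    show scM 0 * f m = 0
    rw [scM_mul, zero_smul]
  map_add' a b := by
    apply LinearMap.ext; intro f; funext m
    show scM (a+b) * f m = scM a * f m + scM b * f m
    rw [scM_mul, scM_mul, scM_mul, add_smul]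
  commutes' c := by
    apply LinearMap.ext; intro f; funext m
    show scM (algebraMap k A c) * f m = (algebraMap k (MM A →ₗ[k] MM A) c) f m
    rw [scM_mul, algebraMap_smul]
    rw [Algebra.algebraMap_eq_smul_one]
    show c • f m = (c • (1 : MM A →ₗ[k] MM A)) f m
    rfl

lemma Femb_diag (a : A) : IsDiagOp k (Femb (A := A) (k := k) a) (fun _ => scM a) :=
  fun _ _ => rfl

end Stage7

section Stage8
variable {A : Type} [Ring A]
variable {k : Type} [Field k] [Algebra k A]
variable (x : ℕ → A)

namespace IsDiagOp
lemma add {T T' : MM A →ₗ[k] MM A} {P P'} (h : IsDiagOp k T P) (h' : IsDiagOp k T' P') :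
    IsDiagOp k (T + T') (fun m => P m + P' m) := by
  intro f m
  have : (T + T') f m = T f m + T' f m := rfl
  rw [this, h, h', add_mul]
end IsDiagOp

/-- parity rewriting lemmas -/
lemma R1 (L : ℤ) (σ : ℕ) : Vlen x (2*L - 2*(σ:ℤ) + 1) (2*σ+1) = hn x (L - σ) := by
  rw [show (2*L - 2*(σ:ℤ) + 1) = 2*(L - σ) + 1 by ring, Vlen_oo]

lemma R3 (L : ℤ) (σ : ℕ) : Vlen x (2*L - 2*(σ:ℤ)) (2*σ+1) = hm x L := by
  rw [show (2*L - 2*(σ:ℤ)) = 2*(L - σ) by ring, Vlen_ee]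
  congr 1
  ring

lemma R4 (L : ℤ) (s : ℕ) : Vlen x (2*L - 1) (2*s+3) = hn x (L - 1) := by
  rw [show 2*s+3 = 2*(s+1)+1 by ring, show (2*L - 1 : ℤ) = 2*(L-1)+1 by ring, Vlen_oo]

lemma R5 (L : ℤ) (σ : ℕ) : Vlen x (2*L + 1 - 2*(σ:ℤ) + 1) (2*σ+1) = hm x (L + 1) := by
  rw [show (2*L + 1 - 2*(σ:ℤ) + 1) = 2*(L - σ + 1) by ring, Vlen_ee]
  congr 1
  ring

lemma R7 (L : ℤ) (σ : ℕ) : Vlen x (2*L + 1 - 2*(σ:ℤ)) (2*σ+1) = hn x (L - σ) := by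
  rw [show (2*L + 1 - 2*(σ:ℤ)) = 2*(L - σ) + 1 by ring, Vlen_oo]

lemma R8 (L : ℤ) (s : ℕ) : Vlen x (2*L + 1 - 1) (2*s+3) = hm x (L + s + 1) := by
  rw [show (2*L + 1 - 1 : ℤ) = 2*L by ring, show 2*s+3 = 2*(s+1)+1 by ring, Vlen_ee]
  congr 1
  push_cast
  ring

lemma arg_shift {i : ℕ} (L : ℤ) {σ : ℕ} (hσ : σ ∈ Finset.range (2^(2*i+3))) :
    L + ((2^(2*i+3)+1-σ : ℕ) : ℤ) = (L - σ) + dle i := by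
  have hσ' : σ ≤ 2^(2*i+3)+1 := by
    have := Finset.mem_range.mp hσ
    omega
  rw [Nat.cast_sub hσ']
  unfold dle
  push_cast
  ring

lemma arg_shift' {i : ℕ} (L : ℤ) {σ : ℕ} (hσ : σ ∈ Finset.range (2^(2*i+3))) :
    L + ((2^(2*i+3)-σ : ℕ) : ℤ) + 1 = (L - σ) + dle i := by
  have hσ' : σ ≤ 2^(2*i+3) := by
    have := Finset.mem_range.mp hσ
    omega
  rw [Nat.cast_sub hσ']
  unfold dle
  push_cast
  ring

open Classical in
lemma sumS1 {i : ℕ} (hi : 1 ≤ i) (L : ℤ) :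
    ∑ σ ∈ Finset.range (2^(2*i+3)),
      (hn x (L - σ) - 1) * (hm x (L + ((2^(2*i+3)+1-σ : ℕ) : ℤ)) - 1)
      = !![-(gel x i), 0; 0, 0] := by
  rw [Finset.sum_congr rfl (fun σ hσ => by rw [arg_shift L hσ]), sumID1 x hi L]

open Classical in
lemma sumS2 {i : ℕ} (hi : 1 ≤ i) (L : ℤ) :
    ∑ σ ∈ Finset.range (2^(2*i+3)),
      (hm x (L + ((2^(2*i+3)+1-σ : ℕ) : ℤ)) - 1) * (hn x (L - σ) - 1)
      = !![0, 0; 0, -(gel x i)] := by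
  rw [Finset.sum_congr rfl (fun σ hσ => by rw [arg_shift L hσ]), sumID2 x hi L]

open Classical in
lemma sumS3 {i : ℕ} (hi : 1 ≤ i) (L : ℤ) :
    ∑ σ ∈ Finset.range (2^(2*i+3)),
      (hn x (L - σ) - 1) * (hm x (L + ((2^(2*i+3)-σ : ℕ) : ℤ) + 1) - 1)
      = !![-(gel x i), 0; 0, 0] := by
  rw [Finset.sum_congr rfl (fun σ hσ => by rw [arg_shift' L hσ]), sumID1 x hi L]

open Classical in
lemma sumS4 {i : ℕ} (hi : 1 ≤ i) (L : ℤ) :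
    ∑ σ ∈ Finset.range (2^(2*i+3)),
      (hm x (L + ((2^(2*i+3)-σ : ℕ) : ℤ) + 1) - 1) * (hn x (L - σ) - 1)
      = !![0, 0; 0, -(gel x i)] := by
  rw [Finset.sum_congr rfl (fun σ hσ => by rw [arg_shift' L hσ]), sumID2 x hi L]

lemma e_matrices_sum (g : A) :
    (!![-g, 0; 0, 0] + !![0, 0; 0, -g] : Matrix (Fin 2) (Fin 2) A) = - scM g := by
  ext a b
  fin_cases a <;> fin_cases b <;> simp [scM]

end Stage8

section Stage9
variable {A : Type} [Ring A]
variable {k : Type} [Field k] [Algebra k A]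
variable (x : ℕ → A)

lemma final_even (P : ℕ) (K3 K4 : Matrix (Fin 2) (Fin 2) A) (g : A) :
    P • ((0 : Matrix (Fin 2) (Fin 2) A) + 0 + K3 + K4)
      - (!![-g, 0; 0, 0] + !![0, 0; 0, -g] + P • K3 + P • K4) = scM g := by
  rw [e_matrices_sum g]
  simp only [zero_add, smul_add]
  abel

lemma final_odd (P : ℕ) (K1 K2 : Matrix (Fin 2) (Fin 2) A) (g : A) :
    P • (K1 + K2 + 0 + 0)
      - (P • K1 + P • K2 + !![-g, 0; 0, 0] + !![0, 0; 0, -g]) = scM g := by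
  have h2 : P • K1 + P • K2 + !![-g, 0; 0, 0] + !![0, 0; 0, -g]
      = P • K1 + P • K2 + (!![-g, 0; 0, 0] + !![0, 0; 0, -g]) := by
    rw [add_assoc]
  rw [h2, e_matrices_sum g]
  simp only [add_zero, smul_add]
  abel

open Classical in
lemma Phi_eq {i : ℕ} (hi : 1 ≤ i) :
    ((2^(2*i+3) : ℕ)) • ((bW k x 1 - 1) * (aW k x 1 - 1) + (aW k x 1 - 1) * (bW k x 1 - 1)
      + (dW k x 1 - 1) * (cW k x 0 - 1) + (cW k x 0 - 1) * (dW k x 1 - 1))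
    - ( (∑ σ ∈ Finset.range (2^(2*i+3)), (bW k x σ - 1) * (aW k x (2^(2*i+3)+1-σ) - 1))
      + (∑ σ ∈ Finset.range (2^(2*i+3)), (aW k x (2^(2*i+3)+1-σ) - 1) * (bW k x σ - 1))
      + (∑ σ ∈ Finset.range (2^(2*i+3)), (dW k x σ - 1) * (cW k x (2^(2*i+3)-σ) - 1))
      + (∑ σ ∈ Finset.range (2^(2*i+3)), (cW k x (2^(2*i+3)-σ) - 1) * (dW k x σ - 1)) )
    = Femb (k := k) (gel x i) := by
  have hone : IsDiagOp k (1 : MM A →ₗ[k] MM A) (fun _ => 1) := IsDiagOp.one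
  have hb : ∀ σ : ℕ, IsDiagOp k (bW k x σ - 1)
      (fun m => Vlen x (m - 2*(σ:ℤ) + 1) (2*σ+1) - 1) :=
    fun σ => (bW_diag k x σ).sub hone
  have ha : ∀ τ : ℕ, IsDiagOp k (aW k x τ - 1) (fun m => Vlen x m (2*τ+1) - 1) :=
    fun τ => (aW_diag k x τ).sub hone
  have hd : ∀ σ : ℕ, IsDiagOp k (dW k x σ - 1)
      (fun m => Vlen x (m - 2*(σ:ℤ)) (2*σ+1) - 1) :=
    fun σ => (dW_diag k x σ).sub hone
  have hc : ∀ τ : ℕ, IsDiagOp k (cW k x τ - 1) (fun m => Vlen x (m-1) (2*τ+3) - 1) :=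
    fun τ => (cW_diag k x τ).sub hone
  have hCs : IsDiagOp k
      ((bW k x 1 - 1) * (aW k x 1 - 1) + (aW k x 1 - 1) * (bW k x 1 - 1)
        + (dW k x 1 - 1) * (cW k x 0 - 1) + (cW k x 0 - 1) * (dW k x 1 - 1))
      (fun m => (Vlen x (m - 2*((1:ℕ):ℤ) + 1) (2*1+1) - 1) * (Vlen x m (2*1+1) - 1)
        + (Vlen x m (2*1+1) - 1) * (Vlen x (m - 2*((1:ℕ):ℤ) + 1) (2*1+1) - 1)
        + (Vlen x (m - 2*((1:ℕ):ℤ)) (2*1+1) - 1) * (Vlen x (m-1) (2*0+3) - 1)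
        + (Vlen x (m-1) (2*0+3) - 1) * (Vlen x (m - 2*((1:ℕ):ℤ)) (2*1+1) - 1)) :=
    ((((hb 1).mul (ha 1)).add ((ha 1).mul (hb 1))).add
      (((hd 1).mul (hc 0)))).add ((hc 0).mul (hd 1))
  have hS1 : IsDiagOp k
      (∑ σ ∈ Finset.range (2^(2*i+3)), (bW k x σ - 1) * (aW k x (2^(2*i+3)+1-σ) - 1))
      (fun m => ∑ σ ∈ Finset.range (2^(2*i+3)),
        (Vlen x (m - 2*(σ:ℤ) + 1) (2*σ+1) - 1) * (Vlen x m (2*(2^(2*i+3)+1-σ)+1) - 1)) :=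
    IsDiagOp.fsum _ _ _ (fun σ _ => (hb σ).mul (ha (2^(2*i+3)+1-σ)))
  have hS2 : IsDiagOp k
      (∑ σ ∈ Finset.range (2^(2*i+3)), (aW k x (2^(2*i+3)+1-σ) - 1) * (bW k x σ - 1))
      (fun m => ∑ σ ∈ Finset.range (2^(2*i+3)),
        (Vlen x m (2*(2^(2*i+3)+1-σ)+1) - 1) * (Vlen x (m - 2*(σ:ℤ) + 1) (2*σ+1) - 1)) :=
    IsDiagOp.fsum _ _ _ (fun σ _ => (ha (2^(2*i+3)+1-σ)).mul (hb σ))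
  have hS3 : IsDiagOp k
      (∑ σ ∈ Finset.range (2^(2*i+3)), (dW k x σ - 1) * (cW k x (2^(2*i+3)-σ) - 1))
      (fun m => ∑ σ ∈ Finset.range (2^(2*i+3)),
        (Vlen x (m - 2*(σ:ℤ)) (2*σ+1) - 1) * (Vlen x (m-1) (2*(2^(2*i+3)-σ)+3) - 1)) :=
    IsDiagOp.fsum _ _ _ (fun σ _ => (hd σ).mul (hc (2^(2*i+3)-σ)))
  have hS4 : IsDiagOp k
      (∑ σ ∈ Finset.range (2^(2*i+3)), (cW k x (2^(2*i+3)-σ) - 1) * (dW k x σ - 1))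
      (fun m => ∑ σ ∈ Finset.range (2^(2*i+3)),
        (Vlen x (m-1) (2*(2^(2*i+3)-σ)+3) - 1) * (Vlen x (m - 2*(σ:ℤ)) (2*σ+1) - 1)) :=
    IsDiagOp.fsum _ _ _ (fun σ _ => (hc (2^(2*i+3)-σ)).mul (hd σ))
  have hLHS := (hCs.nsmul (2^(2*i+3))).sub (((hS1.add hS2).add hS3).add hS4)
  refine IsDiagOp.ext hLHS (Femb_diag (gel x i)) ?_
  intro m
  rcases Int.even_or_odd m with ⟨L, rfl⟩ | ⟨L, rfl⟩
  · have hLL : (L + L : ℤ) = 2*L := by ring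
    simp only [hLL, R1 x L, Vlen_ee x, R3 x L, R4 x L]
    simp only [Nat.cast_one]
    rw [sumS1 x hi L, sumS2 x hi L, Finset.sum_const, Finset.card_range,
      Finset.sum_const, Finset.card_range]
    have hK1 : (hn x (L-1) - 1) * (hm x (L+1) - 1) = 0 := by
      have h := term0a x (L-1)
      rwa [show (L-1+2 : ℤ) = L+1 by ring] at h
    have hK2 : (hm x (L+1) - 1) * (hn x (L-1) - 1) = 0 := by
      have h := term0b x (L-1)
      rwa [show (L-1+2 : ℤ) = L+1 by ring] at h
    rw [hK1, hK2]
    exact final_even _ _ _ _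
  · simp only [R5 x L, Vlen_oo x, R7 x L, R8 x L]
    simp only [Nat.cast_one, Nat.cast_zero, add_zero]
    rw [sumS3 x hi L, sumS4 x hi L, Finset.sum_const, Finset.card_range,
      Finset.sum_const, Finset.card_range]
    have hK3 : (hn x (L-1) - 1) * (hm x (L+1) - 1) = 0 := by
      have h := term0a x (L-1)
      rwa [show (L-1+2 : ℤ) = L+1 by ring] at h
    have hK4 : (hm x (L+1) - 1) * (hn x (L-1) - 1) = 0 := by
      have h := term0b x (L-1)
      rwa [show (L-1+2 : ℤ) = L+1 by ring] at h
    rw [hK3, hK4]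
    exact final_odd _ _ _ _

end Stage9

section Final
variable (k : Type) [Field k] {A : Type} [Ring A] [Algebra k A] (x : ℕ → A)

noncomputable def SAlg : Subalgebra k (MM A →ₗ[k] MM A) :=
  Algebra.adjoin k {αop k, βop k x}

lemma αop_mem : αop k ∈ SAlg k x := Algebra.subset_adjoin (by simp)
lemma βop_mem : βop k x ∈ SAlg k x := Algebra.subset_adjoin (by simp)

lemma aW_mem (τ : ℕ) : aW k x τ ∈ SAlg k x :=
  mul_mem (mul_mem (αop_mem k x) (pow_mem (βop_mem k x) _)) (pow_mem (αop_mem k x) _)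
lemma bW_mem (σ : ℕ) : bW k x σ ∈ SAlg k x :=
  mul_mem (mul_mem (pow_mem (αop_mem k x) _) (pow_mem (βop_mem k x) _)) (αop_mem k x)
lemma cW_mem (τ : ℕ) : cW k x τ ∈ SAlg k x :=
  mul_mem (mul_mem (pow_mem (αop_mem k x) _) (pow_mem (βop_mem k x) _))
    (pow_mem (αop_mem k x) _)
lemma dW_mem (σ : ℕ) : dW k x σ ∈ SAlg k x :=
  mul_mem (pow_mem (αop_mem k x) _) (pow_mem (βop_mem k x) _)

lemma Femb_gel_mem {i : ℕ} (hi : 1 ≤ i) : Femb (k := k) (gel x i) ∈ SAlg k x := by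
  rw [← Phi_eq (k := k) x hi]
  have hsub : ∀ W ∈ SAlg k x, W - 1 ∈ SAlg k x :=
    fun W hW => sub_mem hW (one_mem _)
  refine sub_mem (nsmul_mem ?_ _) ?_
  · exact add_mem (add_mem (add_mem
      (mul_mem (hsub _ (bW_mem k x 1)) (hsub _ (aW_mem k x 1)))
      (mul_mem (hsub _ (aW_mem k x 1)) (hsub _ (bW_mem k x 1))))
      (mul_mem (hsub _ (dW_mem k x 1)) (hsub _ (cW_mem k x 0))))
      (mul_mem (hsub _ (cW_mem k x 0)) (hsub _ (dW_mem k x 1)))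
  · refine add_mem (add_mem (add_mem ?_ ?_) ?_) ?_
    · exact sum_mem (fun σ _ =>
        mul_mem (hsub _ (bW_mem k x _)) (hsub _ (aW_mem k x _)))
    · exact sum_mem (fun σ _ =>
        mul_mem (hsub _ (aW_mem k x _)) (hsub _ (bW_mem k x _)))
    · exact sum_mem (fun σ _ =>
        mul_mem (hsub _ (dW_mem k x _)) (hsub _ (cW_mem k x _)))
    · exact sum_mem (fun σ _ =>
        mul_mem (hsub _ (cW_mem k x _)) (hsub _ (dW_mem k x _)))

lemma gel_succ (i : ℕ) :
    gel x (i+1) = x (i+1) + ∑ j ∈ Finset.Icc 1 i, (4^(i+1-j) : ℕ) • x j := by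
  unfold gel
  rw [← Finset.insert_Icc_right_eq_Icc_add_one (by omega : 1 ≤ i+1), Finset.sum_insert (by simp)]
  rw [Nat.sub_self, pow_zero, one_smul]

lemma Femb_x_mem : ∀ i : ℕ, 1 ≤ i → Femb (k := k) (x i) ∈ SAlg k x := by
  intro i
  induction i using Nat.strong_induction_on with
  | _ i IH =>
    intro hi
    obtain ⟨i', rfl⟩ : ∃ i', i = i' + 1 := ⟨i - 1, by omega⟩
    have hx : x (i'+1) = gel x (i'+1) - ∑ j ∈ Finset.Icc 1 i', (4^(i'+1-j) : ℕ) • x j := by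
      rw [gel_succ]
      abel
    rw [hx, map_sub, map_sum]
    refine sub_mem (Femb_gel_mem k x (by omega)) (sum_mem (fun j hj => ?_))
    rw [map_nsmul]
    have hj' := Finset.mem_Icc.mp hj
    exact nsmul_mem (IH j (by omega) hj'.1) _

lemma Femb_all_mem (X : Set A) (hX : ∀ a ∈ X, ∃ i, 1 ≤ i ∧ x i = a)
    (hXt : Algebra.adjoin k X = ⊤) (a : A) : Femb (k := k) a ∈ SAlg k x := by
  have ha : a ∈ Algebra.adjoin k X := by rw [hXt]; trivial
  induction ha using Algebra.adjoin_induction with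
  | mem y hy =>
    obtain ⟨i, hi1, rfl⟩ := hX y hy
    exact Femb_x_mem k x i hi1
  | algebraMap r =>
    rw [AlgHom.commutes]
    exact algebraMap_mem _ r
  | add y z hy hz ihy ihz =>
    rw [map_add]; exact add_mem ihy ihz
  | mul y z hy hz ihy ihz =>
    rw [map_mul]; exact mul_mem ihy ihz

lemma Femb_inj : Function.Injective (Femb (k := k) (A := A)) := by
  intro a b hab
  have ha' := Femb_diag (k := k) a (fun _ => (1 : Matrix (Fin 2) (Fin 2) A)) 0
  have hb' := Femb_diag (k := k) b (fun _ => (1 : Matrix (Fin 2) (Fin 2) A)) 0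
  rw [hab] at ha'
  have h2 : scM a = scM b := by
    have := ha'.symm.trans hb'
    simpa using this
  have h3 := congrFun (congrFun h2 0) 0
  simpa [scM] using h3

end Final

end MalcevEmbed
/-- Every countably generated associative unital algebra over a field `k`
can be embedded into a two-generated associative unital `k`-algebra. -/
theorem countably_generated_algebra_embeds_into_two_generated
    (k : Type) [Field k] (A : Type) [Ring A] [Algebra k A]
    (hA : ∃ X : Set A, X.Countable ∧ Algebra.adjoin k X = ⊤) :
    ∃ (B : Type) (_ : Ring B) (_ : Algebra k B) (f : A →ₐ[k] B),
      Function.Injective f ∧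
      ∃ a b : B, Algebra.adjoin k ({a, b} : Set B) = ⊤ := by
  classical
  obtain ⟨X, hXc, hXt⟩ := hA
  have hc : (insert (1:A) X).Countable := hXc.insert 1
  obtain ⟨e, he⟩ := hc.exists_eq_range ⟨1, Set.mem_insert 1 X⟩
  set x : ℕ → A := fun n => e (n - 1) with hxdef
  have hX : ∀ a ∈ X, ∃ i, 1 ≤ i ∧ x i = a := by
    intro a haX
    have h1 : a ∈ insert (1:A) X := Set.mem_insert_of_mem _ haX
    rw [he] at h1
    obtain ⟨n, hn⟩ := h1
    refine ⟨n+1, by omega, ?_⟩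
    simp only [hxdef, Nat.add_sub_cancel]
    exact hn
  refine ⟨MalcevEmbed.SAlg k x, inferInstance, inferInstance,
    (MalcevEmbed.Femb (k := k)).codRestrict (MalcevEmbed.SAlg k x)
      (MalcevEmbed.Femb_all_mem k x X hX hXt), ?_, ?_⟩
  · rw [AlgHom.injective_codRestrict]
    exact MalcevEmbed.Femb_inj k
  · refine ⟨⟨MalcevEmbed.αop k, MalcevEmbed.αop_mem k x⟩,
      ⟨MalcevEmbed.βop k x, MalcevEmbed.βop_mem k x⟩, ?_⟩
    have hset : ({⟨MalcevEmbed.αop k, MalcevEmbed.αop_mem k x⟩,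
        ⟨MalcevEmbed.βop k x, MalcevEmbed.βop_mem k x⟩} : Set ↥(MalcevEmbed.SAlg k x))
        = ((↑) : ↥(MalcevEmbed.SAlg k x) → _) ⁻¹' {MalcevEmbed.αop k, MalcevEmbed.βop k x} := by
      ext z
      simp only [Set.mem_insert_iff, Set.mem_singleton_iff, Set.mem_preimage]
      constructor
      · rintro (rfl | rfl)
        · exact Or.inl rfl
        · exact Or.inr rfl
      · rintro (hz | hz)
        · exact Or.inl (Subtype.ext hz)
        · exact Or.inr (Subtype.ext hz)
    rw [hset]
    exact Algebra.adjoin_adjoin_coe_preimage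
end

section
/- Every countably generated semigroup can be embedded into a simple two-generated semigroup. -/
/-!
Let `raise` and `lower` act on configurations `(state, flag, level)`: `raise` climbs one level and
sets the flag, `lower` descends one level and clears the flag, applying the instruction
`f level` to the state first if the flag was set. If `f` is trivial from some level on, then far
above the ground every product of the two generators merely translates the level. So for any `t`
and `w`, climbing high after `w`, applying `t` and descending again returns to `w` (the flag tells
whether `w` ended with `raise`, which is then replayed): the semigroup they generate is simple.

Both `lower * raise` and `lower ^ 2 * raise ^ 2` keep the level and act on the state by
`f (level + 1)` and `f (level + 2)`. With states `(y, k)` of a counter machine over `WithOne S` we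
let `f 1` increment `k` and `f 2` multiply `y` on the left by the `k`-th generator and reset `k`;
a generator is then the word that resets, counts up to it and multiplies. On level 1 such words act
as a power of the idempotent `f 2`, higher up trivially, so the action of a word depends only on
the element of `S` it represents.
-/

namespace Function.End

variable {α : Type*}

@[simp] lemma mul_apply (f g : Function.End α) (x : α) : (f * g) x = f (g x) := rfl

@[simp] lemma one_apply (x : α) : (1 : Function.End α) x = x := rfl

end Function.End

lemma Subsemigroup.pow_succ_mem {M : Type*} [Monoid M] (S : Subsemigroup M) {x : M}
    (hx : x ∈ S) (n : ℕ) : x ^ (n + 1) ∈ S := by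
  induction n with
  | zero => simpa using hx
  | succ n ih => rw [pow_succ]; exact mul_mem ih hx

lemma Subsemigroup.closure_pair_eq_top {M : Type*} [Mul M] {a b : M} :
    closure {⟨a, subset_closure (Set.mem_insert a {b})⟩,
      ⟨b, subset_closure (Set.mem_insert_of_mem a rfl)⟩} =
      (⊤ : Subsemigroup (closure {a, b})) := by
  rw [← closure_closure_coe_preimage]
  congr 1
  ext ⟨x, hx⟩
  simp [Subtype.ext_iff]

namespace Ladder

structure Config (Q : Type*) where
  state : Q
  flag : Bool
  level : ℕ

variable {Q : Type*}

def raise : Function.End (Config Q) := fun c => ⟨c.state, true, c.level + 1⟩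

def lower (f : ℕ → Function.End Q) : Function.End (Config Q) :=
  fun c => ⟨if c.flag then f c.level c.state else c.state, false, c.level - 1⟩

def ladder (f : ℕ → Function.End Q) : Subsemigroup (Function.End (Config Q)) :=
  Subsemigroup.closure {lower f, raise}

lemma lower_mem (f : ℕ → Function.End Q) : lower f ∈ ladder f :=
  Subsemigroup.subset_closure (Set.mem_insert _ _)

lemma raise_mem (f : ℕ → Function.End Q) : raise ∈ ladder f :=
  Subsemigroup.subset_closure (Set.mem_insert_of_mem _ rfl)

variable {f : ℕ → Function.End Q}

lemma raise_pow_apply {k : ℕ} (hk : k ≠ 0) (c : Config Q) :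
    (raise ^ k) c = ⟨c.state, true, c.level + k⟩ := by
  obtain ⟨k, rfl⟩ := Nat.exists_eq_succ_of_ne_zero hk
  induction k with
  | zero => rfl
  | succ k ih => rw [pow_succ', Function.End.mul_apply, ih k.succ_ne_zero]; rfl

lemma lower_pow_apply (k p : ℕ) (q : Q) :
    (lower f ^ k) ⟨q, false, p + k⟩ = ⟨q, false, p⟩ := by
  induction k with
  | zero => rfl
  | succ k ih => rw [pow_succ, Function.End.mul_apply]; exact ih

variable {N : ℕ}

lemma lower_apply_of_le (hf : ∀ n, N ≤ n → f n = 1) {n : ℕ} (hn : N ≤ n) (q : Q)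
    (L : Bool) :
    lower f ⟨q, L, n⟩ = ⟨q, false, n - 1⟩ := by
  simp [lower, hf n hn]

def ShiftsAbove (t : Function.End (Config Q)) (h e : ℕ) : Prop :=
  ∀ q L p, ∃ L', t ⟨q, L, p + h⟩ = ⟨q, L', p + e⟩

lemma ShiftsAbove.mul {s t : Function.End (Config Q)} {h₁ e₁ h₂ e₂ : ℕ}
    (hs : ShiftsAbove s h₁ e₁) (ht : ShiftsAbove t h₂ e₂) :
    ShiftsAbove (s * t) (h₁ + h₂) (e₁ + e₂) := by
  intro q L p
  obtain ⟨L₁, ht'⟩ := ht q L (p + h₁)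
  obtain ⟨L₂, hs'⟩ := hs q L₁ (p + e₂)
  refine ⟨L₂, ?_⟩
  rw [Function.End.mul_apply, ← add_assoc, ht', add_right_comm, hs', add_assoc, add_comm e₂]

lemma exists_shiftsAbove (hf : ∀ n, N ≤ n → f n = 1) {t : Function.End (Config Q)}
    (ht : t ∈ ladder f) : ∃ h e, ShiftsAbove t h e := by
  induction ht using Subsemigroup.closure_induction with
  | mem t ht =>
    rcases ht with rfl | rfl
    · exact ⟨N + 1, N, fun q L p => ⟨false, lower_apply_of_le hf (by omega) q L⟩⟩
    · exact ⟨0, 1, fun q L p => ⟨true, rfl⟩⟩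
  | mul s t _ _ hs ht =>
    obtain ⟨h₁, e₁, hs⟩ := hs
    obtain ⟨h₂, e₂, ht⟩ := ht
    exact ⟨_, _, hs.mul ht⟩

lemma lower_pow_apply_raise_pow (hf : ∀ n, N ≤ n → f n = 1) {t : Function.End (Config Q)}
    {h e : ℕ} (ht : ShiftsAbove t h e) (c : Config Q) :
    (lower f ^ (N + e + 1)) (t ((raise ^ (N + h + 1)) c)) = ⟨c.state, false, c.level⟩ := by
  obtain ⟨L, hL⟩ := ht c.state true (c.level + N + 1)
  rw [raise_pow_apply (by omega), show c.level + (N + h + 1) = c.level + N + 1 + h by omega, hL,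
    pow_succ, Function.End.mul_apply, lower_apply_of_le hf (by omega),
    show c.level + N + 1 + e - 1 = c.level + (N + e) by omega, lower_pow_apply]

lemma eq_lower_mul_or_eq_raise_mul {w : Function.End (Config Q)} (hw : w ∈ ladder f) :
    (∃ w', w = lower f * w') ∨ ∃ w', w = raise * w' := by
  induction hw using Subsemigroup.closure_induction with
  | mem w hw =>
    rcases hw with rfl | rfl
    · exact .inl ⟨1, (mul_one _).symm⟩
    · exact .inr ⟨1, (mul_one _).symm⟩
  | mul x y _ _ hx _ =>
    rcases hx with ⟨x', rfl⟩ | ⟨x', rfl⟩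
    · exact .inl ⟨x' * y, mul_assoc _ _ _⟩
    · exact .inr ⟨x' * y, mul_assoc _ _ _⟩

theorem exists_mul_mul_eq (hf : ∀ n, N ≤ n → f n = 1) {t w : Function.End (Config Q)}
    (ht : t ∈ ladder f) (hw : w ∈ ladder f) :
    ∃ x ∈ ladder f, ∃ y ∈ ladder f, x * t * y = w := by
  obtain ⟨h, e, hte⟩ := exists_shiftsAbove hf ht
  have descend := lower_pow_apply_raise_pow hf hte
  have lower_pow_mem := (ladder f).pow_succ_mem (lower_mem f)
  have y_mem := mul_mem ((ladder f).pow_succ_mem (raise_mem f) (N + h)) hw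
  rcases eq_lower_mul_or_eq_raise_mul hw with ⟨w', rfl⟩ | ⟨w', rfl⟩
  · refine ⟨_, lower_pow_mem (N + e), _, y_mem, ?_⟩
    funext z
    exact descend _
  · -- descend one level more, then replay the final `raise` of `w`
    refine ⟨raise * lower f ^ (N + e + 1 + 1), mul_mem (raise_mem f) (lower_pow_mem _), _, y_mem,
      ?_⟩
    funext z
    rw [pow_succ']
    simp only [Function.End.mul_apply]
    rw [descend]
    rfl

def levelwise : (ℕ → Function.End Q) →ₙ* Function.End (Config Q) where
  toFun F c := ⟨F c.level c.state, false, c.level⟩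
  map_mul' _ _ := rfl

lemma levelwise_injective : Function.Injective (levelwise (Q := Q)) := by
  intro F G hFG
  funext p q
  exact congrArg Config.state (congrFun hFG ⟨q, false, p⟩)

lemma lower_pow_mul_raise_pow {j : ℕ} (hj : j ≠ 0) :
    lower f ^ j * raise ^ j = levelwise (fun p => f (p + j)) := by
  obtain ⟨j, rfl⟩ := Nat.exists_eq_succ_of_ne_zero hj
  funext c
  rw [Function.End.mul_apply, raise_pow_apply hj, pow_succ, Function.End.mul_apply]
  exact lower_pow_apply j c.level _

end Ladder

namespace CounterMachine

variable {M : Type*}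

def inc : Function.End (M × ℕ) := fun q => (q.1, q.2 + 1)

lemma inc_pow_apply (j : ℕ) (q : M × ℕ) : (inc ^ j) q = (q.1, q.2 + j) := by
  induction j with
  | zero => rfl
  | succ j ih => rw [pow_succ', Function.End.mul_apply, ih]; rfl

variable [Monoid M] (τ : ℕ → M)

/-- Counter value `k + 1` stands for the letter `τ k`, counter value `0` for no letter. -/
def load : Function.End (M × ℕ)
  | (y, 0) => (y, 0)
  | (y, k + 1) => (τ k * y, 0)

def instr : ℕ → Function.End (M × ℕ)
  | 1 => inc
  | 2 => load τ
  | _ => 1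

lemma instr_eq_one {n : ℕ} (hn : 3 ≤ n) : instr τ n = 1 := by
  obtain ⟨n, rfl⟩ := Nat.exists_eq_add_of_le' hn
  rfl

lemma load_isIdempotentElem : IsIdempotentElem (load τ) := by
  funext ⟨y, k⟩
  cases k <;> rfl

def levelAction : M →ₙ* (ℕ → Function.End (M × ℕ)) where
  toFun m
    | 0 => fun q => (m * (load τ q).1, 0)
    | 1 => load τ
    | _ + 2 => 1
  map_mul' m m' := by
    funext p ⟨y, k⟩
    rcases p with _ | _ | p
    · change _ = (m * (load τ (m' * (load τ (y, k)).1, 0)).1, 0)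
      cases k <;> simp [load, mul_assoc]
    · exact congrFun (load_isIdempotentElem τ).symm _
    · rfl

lemma levelAction_injective : Function.Injective (levelAction τ) := by
  intro m m' h
  simpa [levelAction, load] using congrArg Prod.fst (congrFun (congrFun h 0) (1, 0))

lemma levelAction_letter_eq (n : ℕ) :
    levelAction τ (τ n) =
      (fun p => instr τ (p + 2)) * (fun p => instr τ (p + 1)) ^ (n + 1) *
        fun p => instr τ (p + 2) := by
  funext p ⟨y, k⟩
  rcases p with _ | _ | p
  · change _ = load τ ((inc ^ (n + 1)) (load τ (y, k)))
    cases k <;> simp [levelAction, load, inc_pow_apply]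
  · simp [levelAction, instr, (load_isIdempotentElem τ).pow_succ_eq]
  · simp [levelAction, instr_eq_one]

open Ladder in
lemma levelwise_levelAction_mem_ladder (n : ℕ) :
    levelwise (levelAction τ (τ n)) ∈ ladder (instr τ) := by
  have lower_raise_mem {j : ℕ} (hj : j ≠ 0) :
      (fun p => instr τ (p + j)) ∈ (ladder (instr τ)).comap levelwise := by
    rw [Subsemigroup.mem_comap, ← lower_pow_mul_raise_pow hj,
      ← Nat.succ_pred_eq_of_ne_zero hj]
    exact mul_mem ((ladder _).pow_succ_mem (lower_mem _) _)
      ((ladder _).pow_succ_mem (raise_mem _) _)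
  rw [← Subsemigroup.mem_comap, levelAction_letter_eq]
  exact mul_mem (mul_mem (lower_raise_mem two_ne_zero)
    (Subsemigroup.pow_succ_mem _ (lower_raise_mem one_ne_zero) n)) (lower_raise_mem two_ne_zero)

end CounterMachine

open Ladder CounterMachine in
/-- Every countably generated semigroup can be embedded into a simple
two-generated semigroup, where a semigroup `T` is simple iff `T a T = T`
for every `a` in `T`. -/
theorem countably_generated_semigroup_embeds_into_simple_two_generated
    (S : Type) [Semigroup S]
    (hS : ∃ X : Set S, X.Countable ∧ Subsemigroup.closure X = ⊤) :
    ∃ (T : Type) (_ : Semigroup T) (f : S →ₙ* T),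
      Function.Injective f ∧
      (∀ a : T, {z : T | ∃ x y : T, x * a * y = z} = Set.univ) ∧
      ∃ a b : T, Subsemigroup.closure ({a, b} : Set T) = ⊤ := by
  obtain ⟨X, hXc, hXtop⟩ := hS
  obtain ⟨τ, hτ⟩ :=
    Set.countable_iff_exists_subset_range.mp (hXc.image ((↑) : S → WithOne S))
  set φ := levelwise.comp ((levelAction τ).comp WithOne.coeMulHom)
  have hφ : Subsemigroup.closure X ≤ (ladder (instr τ)).comap φ := by
    refine Subsemigroup.closure_le.mpr fun x hx => ?_
    obtain ⟨n, hn⟩ := hτ (Set.mem_image_of_mem _ hx)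
    rw [SetLike.mem_coe, Subsemigroup.mem_comap, MulHom.comp_apply, MulHom.comp_apply,
      WithOne.coeMulHom_apply, ← hn]
    exact levelwise_levelAction_mem_ladder τ n
  refine ⟨ladder (instr τ), inferInstance,
    φ.codRestrict _ fun s => hφ (hXtop ▸ Subsemigroup.mem_top s), ?_, ?_, ?_⟩
  · exact fun s s' h => WithOne.coe_injective <| levelAction_injective τ <|
      levelwise_injective <| congrArg Subtype.val h
  · refine fun t => Set.eq_univ_of_forall fun w => ?_
    obtain ⟨x, hx, y, hy, hxy⟩ := exists_mul_mul_eq (fun _ => instr_eq_one τ) t.2 w.2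
    exact ⟨⟨x, hx⟩, ⟨y, hy⟩, Subtype.ext hxy⟩
  · exact ⟨_, _, Subsemigroup.closure_pair_eq_top⟩
end

section
/- Every countably generated semigroup can be embedded into a 0-simple two-generated semigroup. -/
/-!
Enumerate `M` as `σ : ℕ → M` and let `T` be the semigroup of partial maps on stacks of letters
from `ℕ ⊕ M` generated by two maps: pushing the index `0`, and a dispatcher that reads an opcode
and an index `j` off the top of the stack and then increments the index, pushes `σ j`, multiplies
the top letter by `σ j`, or pops a letter after checking it. Every such map only rewrites a prefix
of the stack: if it sends `X` to `Y`, it sends `X ++ Z` to `Y ++ Z`. Hence a nonzero `g`, sending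
some `X` to some `Y`, becomes the identity when preceded by pushing `X` and followed by popping `Y`,
so the ideal generated by `g` is all of `T`. The zero is the empty map, and `M` embeds by letting
`m` multiply the top letter by `m`.
-/

/-- Partial self-maps of `α`; `f * g` applies `f` first. -/
def PartialEnd (α : Type*) : Type _ := α → Option α

namespace PartialEnd

variable {α : Type*}

instance : MonoidWithZero (PartialEnd α) where
  mul f g w := (f w).bind g
  one := some
  zero _ := none
  mul_assoc f g h := funext fun w => Option.bind_assoc (f w) g h
  one_mul _ := rfl
  mul_one f := funext fun w => Option.bind_fun_some (f w)
  zero_mul _ := rfl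
  mul_zero f := funext fun w => Option.bind_fun_none (f w)

theorem mul_apply (f g : PartialEnd α) (w : α) : (f * g) w = (f w).bind g := rfl

theorem mul_apply_of_eq_some {f : PartialEnd α} {w v : α} (g : PartialEnd α) (h : f w = some v) :
    (f * g) w = g v := by
  rw [mul_apply, h]; rfl

def prefixLocal (α : Type*) : Subsemigroup (PartialEnd (List α)) where
  carrier := {g | ∀ X Y, g X = some Y → ∀ Z, g (X ++ Z) = some (Y ++ Z)}
  mul_mem' {f g} hf hg X Y h Z := by
    obtain ⟨V, hfX, hgV⟩ := Option.bind_eq_some_iff.mp h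
    rw [mul_apply_of_eq_some g (hf X V hfX Z)]
    exact hg V Y hgV Z

end PartialEnd

instance {α : Type*} [Countable α] : Countable (FreeSemigroup α) :=
  Function.Injective.countable (f := fun (w : FreeSemigroup α) ↦ (w.head, w.tail))
    fun _ _ h ↦ FreeSemigroup.ext (congrArg Prod.fst h) (congrArg Prod.snd h)

theorem Subsemigroup.countable_of_closure_eq_top {S : Type*} [Semigroup S] {X : Set S}
    (hX : X.Countable) (h : Subsemigroup.closure X = ⊤) : Countable S := by
  have := hX.to_subtype
  refine Function.Surjective.countable (f := FreeSemigroup.lift ((↑) : X → S)) ?_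
  rw [← MulHom.srange_eq_top_iff_surjective, eq_top_iff, ← h, Subsemigroup.closure_le]
  exact fun x hx ↦ ⟨FreeSemigroup.of ⟨x, hx⟩, FreeSemigroup.lift_of _ _⟩

theorem ideal_eq_zero_or_univ_of_forall_mul_mul_eq {T : Type*} [SemigroupWithZero T]
    (h : ∀ g : T, g ≠ 0 → ∀ t, ∃ p q, p * g * q = t) (I : Set T) (hI : I.Nonempty)
    (hmul : ∀ s ∈ I, ∀ t, t * s ∈ I ∧ s * t ∈ I) : I = {0} ∨ I = Set.univ := by
  rcases I.subsingleton_or_nontrivial with hsub | hnt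
  · obtain ⟨s, hs⟩ := hI
    have h0 : (0 : T) ∈ I := by simpa using (hmul s hs 0).1
    exact Or.inl (hsub.eq_singleton_of_mem h0)
  · obtain ⟨g, hgI, hg⟩ := hnt.exists_ne 0
    refine Or.inr (Set.eq_univ_of_forall fun t ↦ ?_)
    obtain ⟨p, q, rfl⟩ := h g hg t
    exact (hmul _ (hmul g hgI p).1 q).2

open PartialEnd

noncomputable section

namespace StackMachine

abbrev Stack (M : Type*) := List (ℕ ⊕ M)

section Machines

variable {M : Type*} [Mul M] (σ : ℕ → M)

open Classical in
/-- Opcode `2` (multiply the top letter by `σ j`) is undefined on the empty stack, as pushing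
`σ j` there would break prefix locality. -/
def dispatch : PartialEnd (Stack M) := fun
  | .inl 0 :: .inl j :: W => some (.inl (j + 1) :: W)
  | .inl 1 :: .inl j :: W => some (.inr (σ j) :: W)
  | .inl 2 :: .inl j :: .inr y :: W => some (.inr (y * σ j) :: W)
  | .inl 2 :: .inl j :: .inl i :: W => some (.inr (σ j) :: .inl i :: W)
  | .inl 3 :: .inl j :: .inr y :: W => if y = σ j then some W else none
  | .inl 4 :: .inl j :: .inl i :: W => if i = j then some W else none
  | _ => none

def push0 : PartialEnd (Stack M) := fun W => some (.inl 0 :: W)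

theorem dispatch_mem_prefixLocal : dispatch σ ∈ prefixLocal (ℕ ⊕ M) := by
  intro X Y h Z
  unfold dispatch at h
  split at h <;> (try split_ifs at h) <;> cases h <;> simp_all [dispatch]

def machines : Subsemigroup (PartialEnd (Stack M)) := Subsemigroup.closure {dispatch σ, push0}

theorem dispatch_mem : dispatch σ ∈ machines σ :=
  Subsemigroup.subset_closure (Set.mem_insert _ _)

theorem push0_mem : push0 ∈ machines σ :=
  Subsemigroup.subset_closure (Set.mem_insert_of_mem _ rfl)

theorem machines_le_prefixLocal : machines σ ≤ prefixLocal (ℕ ⊕ M) := by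
  refine Subsemigroup.closure_le.2 ?_
  rintro _ (rfl | rfl)
  · exact dispatch_mem_prefixLocal σ
  · rintro X Y ⟨⟩ Z
    rfl

def pushIndex : ℕ → PartialEnd (Stack M)
  | 0 => push0
  | n + 1 => pushIndex n * push0 * dispatch σ

theorem pushIndex_apply (n : ℕ) (W : Stack M) : pushIndex σ n W = some (.inl n :: W) := by
  induction n with
  | zero => rfl
  | succ n ih => rw [pushIndex, mul_assoc, mul_apply_of_eq_some _ ih]; rfl

theorem pushIndex_mem (n : ℕ) : pushIndex σ n ∈ machines σ := by
  induction n with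
  | zero => exact push0_mem σ
  | succ n ih => exact mul_mem (mul_mem ih (push0_mem σ)) (dispatch_mem σ)

def run (k j : ℕ) : PartialEnd (Stack M) := pushIndex σ j * pushIndex σ k * dispatch σ

theorem run_apply (k j : ℕ) (W : Stack M) :
    run σ k j W = dispatch σ (.inl k :: .inl j :: W) := by
  rw [run, mul_assoc, mul_apply_of_eq_some _ (pushIndex_apply σ j W),
    mul_apply_of_eq_some _ (pushIndex_apply σ k _)]

theorem run_mem (k j : ℕ) : run σ k j ∈ machines σ :=
  mul_mem (mul_mem (pushIndex_mem σ j) (pushIndex_mem σ k)) (dispatch_mem σ)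

theorem zero_mem_machines : (0 : PartialEnd (Stack M)) ∈ machines σ := by
  have : run σ 5 0 = 0 := funext fun W => run_apply σ 5 0 W
  exact this ▸ run_mem σ 5 0

instance : Zero (machines σ) := ⟨⟨0, zero_mem_machines σ⟩⟩

instance : SemigroupWithZero (machines σ) :=
  Subtype.val_injective.semigroupWithZero _ rfl fun _ _ => rfl

theorem closure_dispatch_push0 :
    Subsemigroup.closure {⟨dispatch σ, dispatch_mem σ⟩, ⟨push0, push0_mem σ⟩} =
      (⊤ : Subsemigroup (machines σ)) := by
  have hpre : ((↑) : machines σ → PartialEnd (Stack M)) ⁻¹' {dispatch σ, push0} =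
      {⟨dispatch σ, dispatch_mem σ⟩, ⟨push0, push0_mem σ⟩} := by
    ext x
    simp [Subtype.ext_iff]
  rw [← hpre]
  exact Subsemigroup.closure_closure_coe_preimage

theorem push0_mul_push0_ne_zero :
    (⟨push0, push0_mem σ⟩ * ⟨push0, push0_mem σ⟩ : machines σ) ≠ 0 :=
  fun h => nomatch congrFun (congrArg Subtype.val h) []

end Machines

section Letters

variable {M : Type*} [Mul M] {σ : ℕ → M} (hσ : Function.Surjective σ)

def pushLetter : ℕ ⊕ M → PartialEnd (Stack M)
  | .inl n => pushIndex σ n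
  | .inr m => run σ 1 (Function.surjInv hσ m)

def popLetter : ℕ ⊕ M → PartialEnd (Stack M)
  | .inl n => run σ 4 n
  | .inr m => run σ 3 (Function.surjInv hσ m)

theorem pushLetter_apply (x : ℕ ⊕ M) (W : Stack M) : pushLetter hσ x W = some (x :: W) := by
  rcases x with n | m
  · exact pushIndex_apply σ n W
  · rw [pushLetter, run_apply, dispatch, Function.surjInv_eq hσ]

theorem popLetter_apply (x : ℕ ⊕ M) (W : Stack M) : popLetter hσ x (x :: W) = some W := by
  rcases x with n | m
  · rw [popLetter, run_apply, dispatch, if_pos rfl]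
  · rw [popLetter, run_apply, dispatch, if_pos (Function.surjInv_eq hσ m).symm]

theorem pushLetter_mem (x : ℕ ⊕ M) : pushLetter hσ x ∈ machines σ := by
  rcases x with n | m
  · exact pushIndex_mem σ n
  · exact run_mem σ 1 _

theorem popLetter_mem (x : ℕ ⊕ M) : popLetter hσ x ∈ machines σ := by
  rcases x with n | m
  · exact run_mem σ 4 n
  · exact run_mem σ 3 _

def pushWord : Stack M → PartialEnd (Stack M)
  | [] => 1
  | x :: X => pushWord X * pushLetter hσ x

def popWord : Stack M → PartialEnd (Stack M)
  | [] => 1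
  | x :: X => popLetter hσ x * popWord X

theorem pushWord_apply (X W : Stack M) : pushWord hσ X W = some (X ++ W) := by
  induction X with
  | nil => rfl
  | cons x X ih => rw [pushWord, mul_apply_of_eq_some _ ih, pushLetter_apply, List.cons_append]

theorem popWord_apply (X W : Stack M) : popWord hσ X (X ++ W) = some W := by
  induction X with
  | nil => rfl
  | cons x X ih =>
    rw [popWord, List.cons_append, mul_apply_of_eq_some _ (popLetter_apply hσ x _), ih]

theorem pushWord_mem {X : Stack M} (hX : X ≠ []) : pushWord hσ X ∈ machines σ := by
  induction X with
  | nil => exact absurd rfl hX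
  | cons x X ih =>
    rcases eq_or_ne X [] with rfl | hX'
    · rw [pushWord, pushWord, one_mul]
      exact pushLetter_mem hσ x
    · exact mul_mem (ih hX') (pushLetter_mem hσ x)

theorem popWord_mem {X : Stack M} (hX : X ≠ []) : popWord hσ X ∈ machines σ := by
  induction X with
  | nil => exact absurd rfl hX
  | cons x X ih =>
    rcases eq_or_ne X [] with rfl | hX'
    · rw [popWord, popWord, mul_one]
      exact popLetter_mem hσ x
    · exact mul_mem (popLetter_mem hσ x) (ih hX')

end Letters

theorem exists_mul_mul_eq {M : Type*} [Mul M] {σ : ℕ → M} (hσ : Function.Surjective σ)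
    (g : machines σ) (hg : g ≠ 0) (t : machines σ) :
    ∃ p q : machines σ, p * g * q = t := by
  obtain ⟨X, hX⟩ : ∃ X, (g : PartialEnd (Stack M)) X ≠ none := by
    by_contra! h
    exact hg (Subtype.ext (funext h))
  obtain ⟨Y, hXY⟩ := Option.ne_none_iff_exists'.mp hX
  -- padded to be nonempty: `pushWord []` is the identity, which is not in `machines σ`
  set X' := X ++ [.inl 0]
  set Y' := Y ++ [.inl 0]
  have hpad := machines_le_prefixLocal σ g.2 X Y hXY [.inl 0]
  have hid : pushWord hσ X' * g * popWord hσ Y' = 1 := funext fun W => by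
    rw [mul_assoc, mul_apply_of_eq_some _ (pushWord_apply hσ X' W),
      mul_apply_of_eq_some _ (machines_le_prefixLocal σ g.2 X' Y' hpad W), popWord_apply]
    rfl
  refine ⟨⟨_, pushWord_mem hσ (X := X') (by simp [X'])⟩,
    ⟨_, mul_mem (popWord_mem hσ (X := Y') (by simp [Y'])) t.2⟩, Subtype.ext ?_⟩
  change _ * _ * (_ * _) = (t : PartialEnd (Stack M))
  rw [← mul_assoc, hid, one_mul]

section Embedding

variable {M : Type*}

def mulTop [Mul M] (m : M) : PartialEnd (Stack M)
  | [] => none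
  | .inr y :: W => some (.inr (y * m) :: W)
  | .inl i :: W => some (.inr m :: .inl i :: W)

theorem run_two_surjInv [Mul M] {σ : ℕ → M} (hσ : Function.Surjective σ) (m : M) :
    run σ 2 (Function.surjInv hσ m) = mulTop m := by
  funext W
  rw [run_apply]
  rcases W with _ | ⟨_ | y, W⟩ <;> simp only [dispatch, mulTop, Function.surjInv_eq hσ]

theorem mulTop_mul [Semigroup M] (m m' : M) : mulTop m * mulTop m' = mulTop (m * m') := by
  funext W
  rcases W with _ | ⟨i | y, W⟩
  · rfl
  · rfl
  · exact congrArg (fun z => some (.inr z :: W)) (mul_assoc y m m')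

theorem mulTop_injective [Mul M] : Function.Injective (mulTop (M := M)) := fun m m' h => by
  simpa [mulTop] using congrFun h [.inl 0]

def embedding [Semigroup M] {σ : ℕ → M} (hσ : Function.Surjective σ) :
    M →ₙ* machines σ where
  toFun m := ⟨mulTop m, run_two_surjInv hσ m ▸ run_mem σ 2 _⟩
  map_mul' m m' := Subtype.ext (mulTop_mul m m').symm

theorem embedding_injective [Semigroup M] {σ : ℕ → M} (hσ : Function.Surjective σ) :
    Function.Injective (embedding hσ) :=
  fun _ _ h => mulTop_injective (congrArg Subtype.val h)

end Embedding

end StackMachine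

end

/-- Every countably generated semigroup can be embedded into a 0-simple
two-generated semigroup: a semigroup `T` with zero is 0-simple if its only
two-sided ideals are `{0}` and `T`, and `T·T ≠ {0}`. -/
theorem countably_generated_semigroup_embeds_into_zero_simple_two_generated
    (S : Type) [Semigroup S]
    (hS : ∃ X : Set S, X.Countable ∧ Subsemigroup.closure X = ⊤) :
    ∃ (T : Type) (_ : SemigroupWithZero T) (f : S →ₙ* T),
      Function.Injective f ∧
      (∀ I : Set T, I.Nonempty → (∀ s ∈ I, ∀ t : T, t * s ∈ I ∧ s * t ∈ I) →
        I = {0} ∨ I = Set.univ) ∧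
      (∃ x y : T, x * y ≠ 0) ∧
      ∃ a b : T, Subsemigroup.closure ({a, b} : Set T) = ⊤ := by
  obtain ⟨X, hX, hXtop⟩ := hS
  have : Countable S := Subsemigroup.countable_of_closure_eq_top hX hXtop
  have : Countable (WithOne S) := inferInstanceAs (Countable (Option S))
  -- `WithOne S` is nonempty even when `S` is empty
  obtain ⟨σ, hσ⟩ := exists_surjective_nat (WithOne S)
  open StackMachine in
  exact ⟨machines σ, inferInstance, (embedding hσ).comp WithOne.coeMulHom,
    (embedding_injective hσ).comp WithOne.coe_injective,
    ideal_eq_zero_or_univ_of_forall_mul_mul_eq (exists_mul_mul_eq hσ),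
    ⟨_, _, push0_mul_push0_ne_zero σ⟩, _, _, closure_dispatch_push0 σ⟩
end

section
/- Every associative differential algebra over a field can be embedded into a simple associative differential algebra. -/
open Cardinal

section Aux

variable {k : Type} [Field k]

/-- If an endomorphism of a vector space has rank equal to the dimension of the space,
then it has a "two-sided multiple" equal to `1`. -/
private lemma exists_mul_eq_one_of_rank {V : Type} [AddCommGroup V] [Module k V]
    (f : Module.End k V) (hf : ¬ LinearMap.rank f < Module.rank k V) :
    ∃ g h : Module.End k V, g * f * h = 1 := by
  have hrank : Module.rank k (LinearMap.range f) = Module.rank k V :=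
    le_antisymm (Submodule.rank_le _) (not_lt.mp hf)
  obtain ⟨C, hC⟩ := Submodule.exists_isCompl (LinearMap.ker f)
  have e1 := Submodule.quotientEquivOfIsCompl _ _ hC
  have e2 := f.quotKerEquivRange
  have hrC : Module.rank k V = Module.rank k C := by
    rw [← hrank, ← e2.rank_eq, e1.rank_eq]
  let e : V ≃ₗ[k] C := LinearEquiv.ofRankEq _ _ hrC
  let h : V →ₗ[k] V := C.subtype ∘ₗ (e : V →ₗ[k] C)
  have hker : LinearMap.ker (f ∘ₗ h) = ⊥ := by
    rw [LinearMap.ker_eq_bot']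
    intro m hm
    have h1 : (e m : V) ∈ LinearMap.ker f := hm
    have h2 : (e m : V) = 0 :=
      (Submodule.disjoint_def.mp hC.disjoint) _ h1 (e m).2
    have : e m = 0 := Subtype.ext h2
    simpa using congrArg e.symm this
  obtain ⟨g, hg⟩ := (f ∘ₗ h).exists_leftInverse_of_injective hker
  refine ⟨g, h, ?_⟩
  rw [mul_assoc]
  exact hg

variable (k) (A : Type) [Ring A] [Algebra k A]

private lemma rank_VV [Nontrivial A] :
    Module.rank k ((ℕ × A) →₀ A) = #(ℕ × A) := by
  rw [rank_finsupp']
  refine Cardinal.mul_eq_left (aleph0_le_mk _) ?_ (ne_of_gt rank_pos)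
  exact (rank_le_card k A).trans
    (Cardinal.mk_le_of_injective (f := fun a : A => ((0 : ℕ), a))
      (fun a b hab => congrArg Prod.snd hab))

set_option maxHeartbeats 1000000 in
/-- The two-sided ideal of endomorphisms of less than full rank. -/
private noncomputable def JJ [Nontrivial A] :
    TwoSidedIdeal (Module.End k ((ℕ × A) →₀ A)) :=
  TwoSidedIdeal.mk' {f | LinearMap.rank f < Module.rank k ((ℕ × A) →₀ A)}
    (by
      simp only [Set.mem_setOf_eq, LinearMap.rank_zero]
      exact lt_of_lt_of_le aleph0_pos (by rw [rank_VV]; exact aleph0_le_mk _))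
    (fun {x y} hx hy => by
      have hℵ : ℵ₀ ≤ Module.rank k ((ℕ × A) →₀ A) := by
        rw [rank_VV]; exact aleph0_le_mk _
      exact (LinearMap.rank_add_le _ _).trans_lt (Cardinal.add_lt_of_lt hℵ hx hy))
    (fun {x} hx => by
      have hr : LinearMap.range (-x) = LinearMap.range x := LinearMap.range_neg x
      simp only [Set.mem_setOf_eq, LinearMap.rank] at hx ⊢
      rw [hr]
      exact hx)
    (fun {x y} hy => by
      simp only [Set.mem_setOf_eq] at hy ⊢
      rw [Module.End.mul_eq_comp]
      exact lt_of_le_of_lt (LinearMap.rank_comp_le_right y x) hy)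
    (fun {x y} hx => by
      simp only [Set.mem_setOf_eq] at hx ⊢
      rw [Module.End.mul_eq_comp]
      exact lt_of_le_of_lt (LinearMap.rank_comp_le_left y x) hx)

set_option maxHeartbeats 1000000 in
private lemma rank_lsmul [Nontrivial A] (a : A) (ha : a ≠ 0) :
    ¬ LinearMap.rank (Algebra.lsmul k k ((ℕ × A) →₀ A) a) < Module.rank k ((ℕ × A) →₀ A) := by
  rw [not_lt, rank_VV]
  have hw : ∀ j : ℕ × A,
      Finsupp.single j a ∈ LinearMap.range (Algebra.lsmul k k ((ℕ × A) →₀ A) a) := by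
    intro j
    exact ⟨Finsupp.single j (1 : A), by
      simp [Finsupp.smul_single, smul_eq_mul]⟩
  have hinj : LinearMap.ker (Finsupp.mapRange.linearMap
      (α := ℕ × A) (LinearMap.toSpanSingleton k A a)) = ⊥ := by
    rw [LinearMap.ker_eq_bot]
    intro x y hxy
    ext j
    have hj : x j • a = y j • a := by
      have := congrFun (congrArg DFunLike.coe hxy) j
      simpa [Finsupp.mapRange.linearMap_apply, Finsupp.mapRange_apply] using this
    have : (x j - y j) • a = 0 := by rw [sub_smul, hj, sub_self]
    rcases smul_eq_zero.mp this with h | h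
    · exact sub_eq_zero.mp h
    · exact absurd h ha
  have hli : LinearIndependent k fun j : ℕ × A => Finsupp.single j a := by
    have h0 := (Finsupp.basisSingleOne (R := k) (ι := ℕ × A)).linearIndependent.map'
      _ hinj
    have heq : (Finsupp.mapRange.linearMap (α := ℕ × A)
        (LinearMap.toSpanSingleton k A a)) ∘ (Finsupp.basisSingleOne (R := k) (ι := ℕ × A)) =
        fun j : ℕ × A => Finsupp.single j a := by
      funext j
      simp [Finsupp.basisSingleOne, Finsupp.mapRange.linearMap_apply, Finsupp.mapRange_single]
    rwa [heq] at h0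
  have hsinj : Function.Injective fun j : ℕ × A => Finsupp.single j a :=
    Finsupp.single_left_injective ha
  have hspan : Submodule.span k (Set.range fun j : ℕ × A => Finsupp.single j a) ≤
      LinearMap.range (Algebra.lsmul k k ((ℕ × A) →₀ A) a) := by
    rw [Submodule.span_le]
    rintro x ⟨j, rfl⟩
    exact hw j
  calc (#(ℕ × A)) = #(Set.range fun j : ℕ × A => Finsupp.single j a) :=
        (Cardinal.mk_range_eq _ hsinj).symm
    _ = Module.rank k (Submodule.span k (Set.range fun j : ℕ × A => Finsupp.single j a)) :=
        (rank_span hli).symm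
    _ ≤ LinearMap.rank (Algebra.lsmul k k ((ℕ × A) →₀ A) a) := Submodule.rank_mono hspan

end Aux

set_option maxHeartbeats 1000000 in
set_option synthInstance.maxHeartbeats 1000000 in
/-- Every associative differential algebra over a field can be embedded into
a simple associative differential algebra, simplicity meaning that the only
two-sided ideals closed under all the differential operators are `⊥` and `⊤`. -/
theorem differential_algebra_embeds_into_simple
    (k : Type) [Field k] (ι : Type)
    (A : Type) [Ring A] [Algebra k A] (D : ι → A →ₗ[k] A)
    (hD : ∀ i : ι, ∀ a b : A, D i (a * b) = D i a * b + a * D i b) :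
    ∃ (B : Type) (_ : Ring B) (_ : Algebra k B) (E : ι → B →ₗ[k] B),
      (∀ i : ι, ∀ a b : B, E i (a * b) = E i a * b + a * E i b) ∧
      ∃ f : A →ₐ[k] B,
        Function.Injective f ∧
        (∀ i : ι, ∀ a : A, f (D i a) = E i (f a)) ∧
        ∀ I : TwoSidedIdeal B, (∀ i : ι, ∀ x ∈ I, E i x ∈ I) →
          I = ⊥ ∨ I = ⊤ := by
  classical
  rcases subsingleton_or_nontrivial A with hA | hA
  · -- trivial algebra: embed into the trivial algebra
    refine ⟨PUnit, inferInstance, inferInstance, fun _ => 0,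
      fun i a b => Subsingleton.elim _ _,
      ⟨{ toFun := fun _ => 1
         map_one' := rfl
         map_mul' := fun _ _ => Subsingleton.elim _ _
         map_zero' := Subsingleton.elim _ _
         map_add' := fun _ _ => Subsingleton.elim _ _
         commutes' := fun _ => Subsingleton.elim _ _ },
        fun a b _ => Subsingleton.elim a b,
        fun i a => Subsingleton.elim _ _,
        fun I _ => Or.inl ?_⟩⟩
    ext x
    rw [TwoSidedIdeal.mem_bot]
    exact ⟨fun _ => Subsingleton.elim x 0, fun hx => hx ▸ I.zero_mem⟩
  · -- nontrivial algebra
    set V : Type := (ℕ × A) →₀ A with hVdef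
    let R := Module.End k V
    let J : TwoSidedIdeal R := JJ k A
    let B := J.ringCon.Quotient
    letI : Ring B := inferInstance
    let π : @RingHom R B Semiring.toNonAssocSemiring Semiring.toNonAssocSemiring :=
      { toFun := fun x => (x : B)
        map_one' := rfl
        map_mul' := fun _ _ => rfl
        map_zero' := rfl
        map_add' := fun _ _ => rfl }
    have hπ : ∀ x : R, π x = 0 ↔ x ∈ J := by
      intro x
      constructor
      · intro hx
        have : J.ringCon x 0 := (RingCon.eq J.ringCon).mp hx
        exact (TwoSidedIdeal.mem_iff _ _).mpr this
      · intro hx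
        exact (RingCon.eq J.ringCon).mpr ((TwoSidedIdeal.mem_iff _ _).mp hx)
    letI algB : Algebra k B := (π.comp (algebraMap k R)).toAlgebra' (by
      intro c x
      obtain ⟨u, rfl⟩ : ∃ u : R, π u = x := Quot.exists_rep x
      show π _ * π u = π u * π _
      rw [← map_mul, ← map_mul, Algebra.commutes])
    let L : A →ₐ[k] R := Algebra.lsmul k k V
    let Δ : ι → R := fun i => Finsupp.mapRange.linearMap (D i)
    let δ : ι → B := fun i => π (Δ i)
    let E : ι → B →ₗ[k] B := fun i =>
      LinearMap.mulLeft k (δ i) - LinearMap.mulRight k (δ i)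
    have hE : ∀ i : ι, ∀ a b : B, E i (a * b) = E i a * b + a * E i b := by
      intro i a b
      simp only [E, LinearMap.sub_apply, LinearMap.mulLeft_apply, LinearMap.mulRight_apply]
      noncomm_ring
    let F : A →ₐ[k] B :=
      { toRingHom := π.comp L.toRingHom
        commutes' := fun r => congrArg π (L.commutes r) }
    have hFinj : Function.Injective F := by
      rw [injective_iff_map_eq_zero]
      intro a ha
      by_contra h0
      apply rank_lsmul k A a h0
      have hmem : L a ∈ J := (hπ _).mp ha
      simp only [J, JJ, TwoSidedIdeal.mem_mk', Set.mem_setOf_eq] at hmem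
      exact hmem
    have hcompat : ∀ i : ι, ∀ a : A, F (D i a) = E i (F a) := by
      intro i a
      show π (L (D i a)) = δ i * π (L a) - π (L a) * δ i
      have key : Δ i * L a = L (D i a) + L a * Δ i := by
        apply LinearMap.ext
        intro v
        ext j
        show ((Δ i) ((L a) v)) j = ((L (D i a)) v) j + ((L a) ((Δ i) v)) j
        simp only [L, Δ, Algebra.lsmul_coe, Finsupp.mapRange.linearMap_apply,
          Finsupp.mapRange_apply, Finsupp.smul_apply, smul_eq_mul]
        exact hD i a (v j)
      show π (L (D i a)) = π (Δ i) * π (L a) - π (L a) * π (Δ i)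
      rw [← map_mul, ← map_mul, key, map_add, add_sub_cancel_right]
    refine ⟨B, inferInstance, algB, E, hE, F, hFinj, hcompat, ?_⟩
    intro I _
    rcases eq_or_ne I ⊥ with h | h
    · exact Or.inl h
    · right
      rw [← TwoSidedIdeal.one_mem_iff]
      have hex : ∃ x, x ∈ I ∧ x ≠ 0 := by
        by_contra hc
        push_neg at hc
        apply h
        ext x
        rw [TwoSidedIdeal.mem_bot]
        exact ⟨fun hx => hc x hx, fun hx => hx ▸ I.zero_mem⟩
      obtain ⟨x, hxI, hx0⟩ := hex
      obtain ⟨u, rfl⟩ : ∃ u : R, π u = x := Quot.exists_rep x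
      have hu : ¬ LinearMap.rank u < Module.rank k V := by
        intro hlt
        apply hx0
        exact (hπ u).mpr (by
          simp only [J, JJ, TwoSidedIdeal.mem_mk', Set.mem_setOf_eq]
          exact hlt)
      obtain ⟨g, w, hgw⟩ := exists_mul_eq_one_of_rank u hu
      have hmem : π g * π u * π w ∈ I :=
        I.mul_mem_right _ _ (I.mul_mem_left _ _ hxI)
      rwa [← map_mul, ← map_mul, hgw, map_one] at hmem
end

section
/- Let X be a set with |X| > 1 and k a field. Then every countably generated left module over the free associative algebra k⟨X⟩ can be embedded into a cyclic k⟨X⟩-module. -/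
/-!
Glue a countable generating family `g₀, g₁, …` of `M` to a cyclic module: in the quotient of
`M × k⟨X⟩` by the relations `gᵢ = y xⁱ`, the class of `1` generates everything. Nothing of `M`
is killed because the words `y xⁱ` are left linearly independent over `k⟨X⟩`: a word has at
most one of them as a suffix, so a relation `∑ cᵢ y xⁱ = 0` can be read off coefficient by
coefficient.
-/

open Function Submodule

namespace FreeMonoid

variable {α : Type*}

theorem eq_of_mul_of_eq_mul_of {a b : α} {p q : FreeMonoid α} (h : p * of a = q * of b) :
    a = b := by
  have h' := congrArg toList h
  simp only [toList_mul, toList_of] at h'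
  exact (List.append_singleton_inj.mp h').2

theorem eq_of_mul_of_mul_pow_eq {x y : α} (hxy : x ≠ y) {i j : ℕ} {p q : FreeMonoid α}
    (h : p * (of y * of x ^ i) = q * (of y * of x ^ j)) : i = j := by
  wlog hij : i ≤ j generalizing i j p q
  · exact (this h.symm (le_of_not_ge hij)).symm
  obtain ⟨n, rfl⟩ := Nat.exists_eq_add_of_le' hij
  rw [pow_add, ← mul_assoc, ← mul_assoc, ← mul_assoc, mul_left_inj] at h
  cases n with
  | zero => simp
  | succ n =>
    rw [pow_succ, ← mul_assoc] at h
    exact absurd (eq_of_mul_of_eq_mul_of h).symm hxy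

end FreeMonoid

namespace MonoidAlgebra

variable {k G ι : Type*} [Semiring k] [Monoid G] [IsRightCancelMul G] {u : ι → G}

theorem coeff_linearCombination_single_one (hu : ∀ i j (p q : G), p * u i = q * u j → i = j)
    (c : ι →₀ k[G]) (i : ι) (p : G) :
    (Finsupp.linearCombination k[G] (fun i ↦ single (u i) (1 : k)) c).coeff (p * u i)
      = (c i).coeff p := by
  classical
  rw [Finsupp.linearCombination_apply, Finsupp.sum, coeff_sum, Finset.sum_apply',
    Finset.sum_eq_single i]
  · exact (coeff_mul_single_eq_coeff_mul p fun _ _ ↦ mul_left_inj _).trans (mul_one _)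
  · exact fun j _ hji ↦ coeff_mul_single_of_forall_mul_ne _ _ fun q hq ↦ hji (hu _ _ _ _ hq)
  · intro hi
    rw [Finsupp.notMem_support_iff.mp hi, smul_eq_mul, zero_mul, coeff_zero, Finsupp.coe_zero,
      Pi.zero_apply]

theorem linearIndependent_single_one (hu : ∀ i j (p q : G), p * u i = q * u j → i = j) :
    LinearIndependent k[G] (fun i ↦ single (u i) (1 : k)) := by
  intro c d hcd
  ext i p
  rw [← coeff_linearCombination_single_one hu, ← coeff_linearCombination_single_one hu, hcd]

end MonoidAlgebra

theorem FreeAlgebra.linearIndependent_ι_mul_ι_pow {k X : Type*} [CommSemiring k] {x y : X}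
    (hxy : x ≠ y) :
    LinearIndependent (FreeAlgebra k X) (fun i : ℕ ↦ ι k y * ι k x ^ i) := by
  let e := FreeAlgebra.equivMonoidAlgebraFreeMonoid (R := k) (X := X)
  have he : ∀ i : ℕ, e.symm (.single (.of y * .of x ^ i) 1) = ι k y * ι k x ^ i := by
    intro i
    rw [e.symm_apply_eq]
    simp [e, equivMonoidAlgebraFreeMonoid, MonoidAlgebra.single_pow]
  have := (MonoidAlgebra.linearIndependent_single_one (k := k)
    fun _ _ _ _ ↦ FreeMonoid.eq_of_mul_of_mul_pow_eq hxy
    ).map_of_injective_injectiveₛ e e.symm.toAddEquiv.toAddMonoidHom e.injective e.symm.injective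
    (fun r m ↦ by simp [smul_eq_mul])
  simpa [comp_def, he] using this

section CyclicRelations

variable {R M ι : Type*} [Ring R] [AddCommGroup M] [Module R M] (g : ι → M) (w : ι → R)

def cyclicRelations : Submodule R (M × R) := span R (Set.range fun i ↦ (g i, -w i))

variable {g w}

theorem injective_mkQ_cyclicRelations_comp_inl (hw : LinearIndependent R w) :
    Injective ((cyclicRelations g w).mkQ ∘ₗ LinearMap.inl R M R) := by
  rw [← LinearMap.ker_eq_bot, eq_bot_iff]
  intro m hm
  obtain ⟨c, hc⟩ :
      (m, (0 : R)) ∈ LinearMap.range (Finsupp.linearCombination R fun i ↦ (g i, -w i)) := by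
    rwa [Finsupp.range_linearCombination, ← Quotient.mk_eq_zero]
  have hc0 : c = 0 := by
    have hsnd := congrArg Prod.snd hc
    rw [← LinearMap.snd_apply (R := R), Finsupp.apply_linearCombination] at hsnd
    exact linearIndependent_iff.mp hw.neg c hsnd
  simpa [hc0] using hc.symm

theorem span_mkQ_cyclicRelations_inr_one (hg : span R (Set.range g) = ⊤) :
    span R {(cyclicRelations g w).mkQ (0, 1)} = ⊤ := by
  set e := (cyclicRelations g w).mkQ (0, 1)
  have mkQ_inr : ∀ r : R, (cyclicRelations g w).mkQ (0, r) = r • e := by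
    intro r; rw [← map_smul]; simp
  have range_inl_le :
      LinearMap.range ((cyclicRelations g w).mkQ ∘ₗ LinearMap.inl R M R) ≤ span R {e} := by
    rw [LinearMap.range_eq_map, ← hg, map_span, span_le]
    rintro _ ⟨_, ⟨i, rfl⟩, rfl⟩
    have : (cyclicRelations g w).mkQ (g i, 0) = w i • e := by
      rw [← mkQ_inr, ← sub_eq_zero, ← map_sub, mkQ_apply, Quotient.mk_eq_zero]
      exact subset_span ⟨i, by simp⟩
    exact this ▸ smul_mem _ _ (mem_span_singleton_self e)
  rw [eq_top_iff]
  rintro z -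
  obtain ⟨⟨m, r⟩, rfl⟩ := (cyclicRelations g w).mkQ_surjective z
  have hsplit : (m, r) = LinearMap.inl R M R m + (0, r) := by simp
  rw [hsplit, map_add, mkQ_inr]
  exact add_mem (range_inl_le ⟨m, rfl⟩) (smul_mem _ _ (mem_span_singleton_self e))

end CyclicRelations

/-- Let `X` be a set with more than one element and `k` a field. Every
countably generated left module over the free associative algebra `k⟨X⟩` can
be embedded into a cyclic `k⟨X⟩`-module. -/
theorem countably_generated_module_embeds_into_cyclic
    (k : Type) [Field k] (X : Type) (hX : ∃ x y : X, x ≠ y)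
    (M : Type) [AddCommGroup M] [Module (FreeAlgebra k X) M]
    (hM : ∃ S : Set M, S.Countable ∧ Submodule.span (FreeAlgebra k X) S = ⊤) :
    ∃ (N : Type) (_ : AddCommGroup N) (_ : Module (FreeAlgebra k X) N)
      (f : M →ₗ[FreeAlgebra k X] N),
      Function.Injective f ∧
      ∃ y : N, Submodule.span (FreeAlgebra k X) ({y} : Set N) = ⊤ := by
  obtain ⟨x, y, hxy⟩ := hX
  obtain ⟨S, hSc, hS⟩ := hM
  have := hSc.to_subtype
  obtain ⟨n, hn⟩ := Countable.exists_injective_nat S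
  have hw := (FreeAlgebra.linearIndependent_ι_mul_ι_pow (k := k) hxy).comp n hn
  have hg : span (FreeAlgebra k X) (Set.range ((↑) : S → M)) = ⊤ := by
    rwa [Subtype.range_coe]
  exact ⟨_, _, _, _, injective_mkQ_cyclicRelations_comp_inl hw,
    _, span_mkQ_cyclicRelations_inr_one hg⟩
end
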